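/- arXiv:1510.04740 — 7 statements merged into one kernel-verified Lean document; each statement's English description precedes it below -/
import Mathlib

section
/- Suppose consistency holds (Y = A·Y¹ + (1−A)·Y⁰ almost surely), for a = 0,1 the treatment A and the potential outcome Yᵃ are conditionally independent given σ(L), positivity holds (δ ≤ π₀(L) ≤ 1−δ almost surely for some δ > 0), and Y⁰, Y¹ are integrable. Then the average causal effect is identified by the g-computation formula: E[Y¹ − Y⁰] = E[μ₀(L,1) − μ₀(L,0)]. -/
/-!
Given `σ(L)`, the treatment `A` is independent of `Yᵃ`, so
`E[1{A=a} Yᵃ | L] = P(A = a | L) · E[Yᵃ | L]`; this factorisation holds fibrewise, since for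
almost every `ω` the conditional-expectation kernel at `ω` makes `A` and `Yᵃ` independent.
By consistency `1{A=a} Yᵃ = 1{A=a} Y`, whose conditional expectation is `μ₀(L,a) π₀ₐ(L)`, and
positivity lets us cancel `π₀ₐ(L)`. Hence `E[Yᵃ | L] = μ₀(L,a)`, and integrating out `L` gives
the g-computation formula.
-/

open MeasureTheory ProbabilityTheory

theorem norm_ite_one_zero_le (p : Prop) [Decidable p] : ‖if p then (1 : ℝ) else 0‖ ≤ 1 := by
  split_ifs <;> simp

section IteEq

variable {Ω : Type*} [MeasurableSpace Ω] {A : Ω → ℝ}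

theorem Measurable.ite_eq_one_zero (hA : Measurable A) (a : ℝ) :
    Measurable fun ω => if A ω = a then (1 : ℝ) else 0 :=
  Measurable.ite (hA (measurableSet_singleton a)) measurable_const measurable_const

theorem Measurable.integrable_ite_eq_one_zero {μ : Measure Ω} [IsFiniteMeasure μ]
    (hA : Measurable A) (a : ℝ) : Integrable (fun ω => if A ω = a then (1 : ℝ) else 0) μ :=
  .of_bound (hA.ite_eq_one_zero a).aestronglyMeasurable 1
    (ae_of_all _ fun _ => norm_ite_one_zero_le _)

end IteEq

namespace ProbabilityTheory

variable {Ω : Type*} {m' mΩ : MeasurableSpace Ω} [StandardBorelSpace Ω] {hm' : m' ≤ mΩ}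
  {μ : Measure Ω} [IsFiniteMeasure μ]

theorem CondIndepFun.ae_indepFun_condExpKernel {β β' : Type*} [MeasurableSpace β]
    [MeasurableSpace β'] [MeasurableSpace.CountableOrCountablyGenerated Ω (β × β')]
    {f : Ω → β} {g : Ω → β'} (hf : Measurable f) (hg : Measurable g)
    (hfg : CondIndepFun m' hm' f g μ) :
    ∀ᵐ ω ∂μ, IndepFun f g (condExpKernel μ m' ω) := by
  rw [condIndepFun_iff_map_prod_eq_prod_map_map hf hg] at hfg
  filter_upwards [ae_of_ae_trim hm' hfg] with ω hω
  rw [indepFun_iff_map_prod_eq_prod_map_map hf.aemeasurable hg.aemeasurable]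
  simpa [Kernel.map_apply _ hf, Kernel.map_apply _ hg, Kernel.map_apply _ (hf.prodMk hg),
    Kernel.prod_apply] using hω

theorem CondIndepFun.condExp_mul_ae_eq {f g : Ω → ℝ} (hf : Measurable f) (hg : Measurable g)
    (hfg : CondIndepFun m' hm' f g μ) (hf_int : Integrable f μ) (hg_int : Integrable g μ)
    (hfg_int : Integrable (f * g) μ) :
    μ[f * g | m'] =ᵐ[μ] μ[f | m'] * μ[g | m'] := by
  filter_upwards [condExp_ae_eq_integral_condExpKernel hm' hfg_int,
    condExp_ae_eq_integral_condExpKernel hm' hf_int,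
    condExp_ae_eq_integral_condExpKernel hm' hg_int,
    hfg.ae_indepFun_condExpKernel hf hg] with ω hfg' hf' hg' hω
  rw [hfg', Pi.mul_apply, hf', hg']
  exact hω.integral_mul_eq_mul_integral hf.aestronglyMeasurable hg.aestronglyMeasurable

theorem condExp_potentialOutcome_ae_eq {A Y Ya : Ω → ℝ} {a : ℝ} {p c : Ω → ℝ}
    (hA : Measurable A) (hYa : Measurable Ya) (hYa_int : Integrable Ya μ)
    (hcons : ∀ᵐ ω ∂μ, A ω = a → Y ω = Ya ω) (hindep : CondIndepFun m' hm' A Ya μ)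
    (hp : μ[fun ω => if A ω = a then (1 : ℝ) else 0 | m'] =ᵐ[μ] p) (hp0 : ∀ᵐ ω ∂μ, p ω ≠ 0)
    (hc : μ[fun ω => Y ω * (if A ω = a then (1 : ℝ) else 0) | m'] =ᵐ[μ] fun ω => c ω * p ω) :
    μ[Ya | m'] =ᵐ[μ] c := by
  set B : Ω → ℝ := fun ω => if A ω = a then 1 else 0
  have hB : Measurable B := hA.ite_eq_one_zero a
  have hBYa : CondIndepFun m' hm' B Ya μ :=
    hindep.comp (φ := fun x => if x = a then (1 : ℝ) else 0) (ψ := id)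
      (measurable_id.ite_eq_one_zero a) measurable_id
  have hprod : μ[B * Ya | m'] =ᵐ[μ] μ[B | m'] * μ[Ya | m'] :=
    hBYa.condExp_mul_ae_eq hB hYa (hA.integrable_ite_eq_one_zero a) hYa_int
      (hYa_int.bdd_mul hB.aestronglyMeasurable (ae_of_all _ fun _ => norm_ite_one_zero_le _))
  have hobs : B * Ya =ᵐ[μ] fun ω => Y ω * B ω := by
    filter_upwards [hcons] with ω hω
    by_cases h : A ω = a <;> simp [B, h, hω]
  filter_upwards [hprod, condExp_congr_ae hobs, hc, hp, hp0] with ω hprod hobs hc hp hp0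
  rw [hobs, hc, Pi.mul_apply, hp, mul_comm] at hprod
  exact (mul_left_cancel₀ hp0 hprod).symm

end ProbabilityTheory

theorem g_computation_formula_general
    {Ω 𝓛 : Type*} [MeasurableSpace Ω] [StandardBorelSpace Ω]
    [MeasurableSpace 𝓛]
    (P : Measure Ω) [IsProbabilityMeasure P]
    (L : Ω → 𝓛) (A Y Y0 Y1 : Ω → ℝ)
    (hL : Measurable L) (hA : Measurable A)
    (hY0 : Measurable Y0) (hY1 : Measurable Y1)
    (hA01 : ∀ ω, A ω = 0 ∨ A ω = 1)
    -- consistency: Y = A·Y¹ + (1−A)·Y⁰ a.s.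
    (hcons : ∀ᵐ ω ∂P, Y ω = A ω * Y1 ω + (1 - A ω) * Y0 ω)
    -- A and Yᵃ are conditionally independent given σ(L), for a = 0, 1
    (hindep0 : CondIndepFun (MeasurableSpace.comap L inferInstance) hL.comap_le A Y0 P)
    (hindep1 : CondIndepFun (MeasurableSpace.comap L inferInstance) hL.comap_le A Y1 P)
    -- π₀(L) is a version of P(A = 1 ∣ σ(L))
    (π₀ : 𝓛 → ℝ)
    (hps : P[(fun ω => if A ω = 1 then (1 : ℝ) else 0) |
        MeasurableSpace.comap L inferInstance] =ᵐ[P] fun ω => π₀ (L ω))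
    -- positivity: δ ≤ π₀(L) ≤ 1 − δ a.s. for some δ > 0
    (δ : ℝ) (hδ : 0 < δ) (hpos : ∀ᵐ ω ∂P, δ ≤ π₀ (L ω) ∧ π₀ (L ω) ≤ 1 - δ)
    -- integrability of the potential outcomes
    (hY0int : Integrable Y0 P) (hY1int : Integrable Y1 P)
    -- outcome regression: E[Y·1{A=a} ∣ σ(L)] = μ₀(L,a)·π₀ₐ(L) a.s. for a = 0, 1
    (μ₀ : 𝓛 → ℝ → ℝ)
    (hreg : ∀ a ∈ ({0, 1} : Set ℝ),
      P[(fun ω => Y ω * (if A ω = a then (1 : ℝ) else 0)) |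
          MeasurableSpace.comap L inferInstance]
        =ᵐ[P] fun ω => μ₀ (L ω) a * (a * π₀ (L ω) + (1 - a) * (1 - π₀ (L ω)))) :
    ∫ ω, (Y1 ω - Y0 ω) ∂P = ∫ ω, (μ₀ (L ω) 1 - μ₀ (L ω) 0) ∂P := by
  have hm := hL.comap_le
  have hps0 : P[(fun ω => if A ω = 0 then (1 : ℝ) else 0) | MeasurableSpace.comap L inferInstance]
      =ᵐ[P] fun ω => 1 - π₀ (L ω) := by
    have hsplit : (fun ω => if A ω = 0 then (1 : ℝ) else 0)
        = (fun _ => (1 : ℝ)) - fun ω => if A ω = 1 then (1 : ℝ) else 0 := by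
      funext ω; rcases hA01 ω with h | h <;> simp [h]
    rw [hsplit]
    refine (condExp_sub (integrable_const _) (hA.integrable_ite_eq_one_zero 1) _).trans ?_
    filter_upwards [hps] with ω hω
    simp [condExp_const hm, hω]
  have hY1_cond : P[Y1 | MeasurableSpace.comap L inferInstance] =ᵐ[P] fun ω => μ₀ (L ω) 1 := by
    refine condExp_potentialOutcome_ae_eq hA hY1 hY1int ?_ hindep1 hps ?_
      ((hreg 1 (by simp)).trans (.of_forall fun ω => by simp))
    · filter_upwards [hcons] with ω hω h; simp [hω, h]
    · filter_upwards [hpos] with ω hω; linarith [hω.1]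
  have hY0_cond : P[Y0 | MeasurableSpace.comap L inferInstance] =ᵐ[P] fun ω => μ₀ (L ω) 0 := by
    refine condExp_potentialOutcome_ae_eq hA hY0 hY0int ?_ hindep0 hps0 ?_
      ((hreg 0 (by simp)).trans (.of_forall fun ω => by simp))
    · filter_upwards [hcons] with ω hω h; simp [hω, h]
    · filter_upwards [hpos] with ω hω; linarith [hω.2]
  rw [← integral_condExp hm]
  exact integral_congr_ae ((condExp_sub hY1int hY0int _).trans (hY1_cond.sub hY0_cond))

/-- Under consistency, conditional ignorability for `a = 0,1`, positivity and
integrability, the average causal effect is identified by the g-computation formula: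
`E[Y¹ − Y⁰] = E[μ₀(L,1) − μ₀(L,0)]`. -/
theorem g_computation_formula
    {Ω 𝓛 : Type*} [MeasurableSpace Ω] [StandardBorelSpace Ω] [Nonempty Ω]
    [MeasurableSpace 𝓛]
    (P : Measure Ω) [IsProbabilityMeasure P]
    (L : Ω → 𝓛) (A Y Y0 Y1 : Ω → ℝ)
    (hL : Measurable L) (hA : Measurable A) (hY : Measurable Y)
    (hY0 : Measurable Y0) (hY1 : Measurable Y1)
    (hA01 : ∀ ω, A ω = 0 ∨ A ω = 1)
    -- consistency: Y = A·Y¹ + (1−A)·Y⁰ a.s.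
    (hcons : ∀ᵐ ω ∂P, Y ω = A ω * Y1 ω + (1 - A ω) * Y0 ω)
    -- A and Yᵃ are conditionally independent given σ(L), for a = 0, 1
    (hindep0 : CondIndepFun (MeasurableSpace.comap L inferInstance) hL.comap_le A Y0 P)
    (hindep1 : CondIndepFun (MeasurableSpace.comap L inferInstance) hL.comap_le A Y1 P)
    -- π₀(L) is a version of P(A = 1 ∣ σ(L))
    (π₀ : 𝓛 → ℝ) (hπ₀ : Measurable π₀) (hπ₀01 : ∀ l, 0 ≤ π₀ l ∧ π₀ l ≤ 1)
    (hps : P[(fun ω => if A ω = 1 then (1 : ℝ) else 0) |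
        MeasurableSpace.comap L inferInstance] =ᵐ[P] fun ω => π₀ (L ω))
    -- positivity: δ ≤ π₀(L) ≤ 1 − δ a.s. for some δ > 0
    (δ : ℝ) (hδ : 0 < δ) (hpos : ∀ᵐ ω ∂P, δ ≤ π₀ (L ω) ∧ π₀ (L ω) ≤ 1 - δ)
    -- integrability of the potential outcomes
    (hY0int : Integrable Y0 P) (hY1int : Integrable Y1 P)
    -- outcome regression: E[Y·1{A=a} ∣ σ(L)] = μ₀(L,a)·π₀ₐ(L) a.s. for a = 0, 1
    (μ₀ : 𝓛 → ℝ → ℝ) (hμ₀ : Measurable fun p : 𝓛 × ℝ => μ₀ p.1 p.2)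
    (hreg : ∀ a ∈ ({0, 1} : Set ℝ),
      P[(fun ω => Y ω * (if A ω = a then (1 : ℝ) else 0)) |
          MeasurableSpace.comap L inferInstance]
        =ᵐ[P] fun ω => μ₀ (L ω) a * (a * π₀ (L ω) + (1 - a) * (1 - π₀ (L ω)))) :
    ∫ ω, (Y1 ω - Y0 ω) ∂P = ∫ ω, (μ₀ (L ω) 1 - μ₀ (L ω) 0) ∂P :=
  g_computation_formula_general P L A Y Y0 Y1 hL hA hY0 hY1 hA01 hcons hindep0 hindep1 π₀ hps δ hδ
    hpos hY0int hY1int μ₀ hreg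
end

section
/- The map ε ↦ ψ(ε) is differentiable at ε = 0 with derivative ψ'(0) = E[φ(Z)·g(Z)], where φ(Z) = m₁(Z) − m₀(Z) − ψ(0) and mₐ(Z) = 1{A=a}·(Y − μ₀(L,a))/π₀ₐ(L) + μ₀(L,a). In other words, the centered doubly robust function φ satisfies the pathwise-derivative property of the efficient influence function for the g-computation parameter along every bounded mean-zero multiplicative parametric submodel with score g. -/
/-!
Write `G = g(Z)`, `I = 1{A = a}`, `p = π₀ₐ(L)` and `μ = μ₀(L, a)`. Under `(1 + εG)·P` every
conditional expectation given `L` is affine in `ε`: `w_ε = 1 + ε s`, `D_{ε,a} = p + ε r` and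
`N_{ε,a} = μ p + ε q`, where `s = E[G|L]`, `r = E[G I|L]` and `q = E[Y G I|L]`. Hence each arm of
`ψ(ε)` is the integral of the rational function `(μ p + ε q) / (p + ε r) · (1 + ε s)` of `ε`, whose
coefficients are bounded and whose denominator stays above `δ / 2` near `0`, so it may be
differentiated under the integral sign. The derivative at `0` is `E[(q - μ r) / p + μ s]`, and
pulling the `σ(L)`-measurable factors `1 / p` and `μ` back out of the conditional expectations
turns it into `E[mₐ(Z) G]`. Centering by `ψ(0)` costs nothing because `E[G] = 0`.
-/

open MeasureTheory ProbabilityTheory Filter Topology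

noncomputable def ratioFamily (a b c d s t : ℝ) : ℝ :=
  (a + t * b) / (c + t * d) * (1 + t * s)

noncomputable def ratioFamilyDeriv (a b c d s t : ℝ) : ℝ :=
  (b * c - a * d) / (c + t * d) ^ 2 * (1 + t * s) + (a + t * b) / (c + t * d) * s

section RatioFamily

variable {a b c d s t δ K : ℝ}

theorem hasDerivAt_ratioFamily (h : c + t * d ≠ 0) :
    HasDerivAt (ratioFamily a b c d s) (ratioFamilyDeriv a b c d s t) t := by
  have hnum : HasDerivAt (fun x => a + x * b) b t := (hasDerivAt_mul_const b).const_add a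
  have hden : HasDerivAt (fun x => c + x * d) d t := (hasDerivAt_mul_const d).const_add c
  have hlin : HasDerivAt (fun x => 1 + x * s) s t := (hasDerivAt_mul_const s).const_add 1
  refine ((hnum.div hden h).mul hlin).congr_deriv ?_
  simp only [ratioFamilyDeriv, Pi.div_apply]
  ring

theorem abs_mul_le_of_abs_le (hd : |d| ≤ K) : |t * d| ≤ |t| * K :=
  (abs_mul t d).trans_le (mul_le_mul_of_nonneg_left hd (abs_nonneg t))

theorem half_le_add_mul (hc : δ ≤ c) (hd : |d| ≤ K) (ht : |t| * K ≤ δ / 2) :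
    δ / 2 ≤ c + t * d := by
  linarith [neg_abs_le (t * d), (abs_mul_le_of_abs_le hd).trans ht]

theorem abs_ratioFamily_le (hδ : 0 < δ) (ha : |a| ≤ K) (hb : |b| ≤ K) (hc : δ ≤ c) (hd : |d| ≤ K)
    (hs : |s| ≤ K) (ht : |t| * K ≤ δ / 2) :
    |ratioFamily a b c d s t| ≤ (K + δ / 2) / (δ / 2) * (1 + δ / 2) := by
  have hden := half_le_add_mul hc hd ht
  have hnum : |a + t * b| ≤ K + δ / 2 :=
    (abs_add_le _ _).trans (add_le_add ha ((abs_mul_le_of_abs_le hb).trans ht))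
  have hlin : |1 + t * s| ≤ 1 + δ / 2 :=
    (abs_add_le _ _).trans (by rw [abs_one]; linarith [(abs_mul_le_of_abs_le hs).trans ht])
  rw [ratioFamily, abs_mul, abs_div, abs_of_pos (by linarith : 0 < c + t * d)]
  have hK : 0 ≤ K := (abs_nonneg a).trans ha
  bound

theorem abs_ratioFamilyDeriv_le (hδ : 0 < δ) (ha : |a| ≤ K) (hb : |b| ≤ K) (hc : δ ≤ c)
    (hc' : c ≤ K) (hd : |d| ≤ K) (hs : |s| ≤ K) (ht : |t| * K ≤ δ / 2) :
    |ratioFamilyDeriv a b c d s t| ≤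
      (K * K + K * K) / (δ / 2) ^ 2 * (1 + δ / 2) + (K + δ / 2) / (δ / 2) * K := by
  have hden := half_le_add_mul hc hd ht
  have hK : 0 ≤ K := (abs_nonneg a).trans ha
  have hcK : |c| ≤ K := by rw [abs_of_pos (by linarith)]; exact hc'
  have hcross : |b * c - a * d| ≤ K * K + K * K :=
    (abs_sub _ _).trans (by simp only [abs_mul]; bound)
  have hnum : |a + t * b| ≤ K + δ / 2 :=
    (abs_add_le _ _).trans (add_le_add ha ((abs_mul_le_of_abs_le hb).trans ht))
  have hlin : |1 + t * s| ≤ 1 + δ / 2 :=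
    (abs_add_le _ _).trans (by rw [abs_one]; linarith [(abs_mul_le_of_abs_le hs).trans ht])
  refine (abs_add_le _ _).trans ?_
  rw [abs_mul, abs_mul, abs_div, abs_div, abs_pow, abs_of_pos (by linarith : 0 < c + t * d)]
  bound

end RatioFamily

theorem eventually_abs_mul_lt_half {δ : ℝ} (hδ : 0 < δ) (K : ℝ) :
    ∀ᶠ t in 𝓝 (0 : ℝ), |t| * K < δ / 2 :=
  ContinuousAt.eventually_lt (by fun_prop) continuousAt_const (by simpa using half_pos hδ)

section IntegralRatioFamily

variable {Ω : Type*} [MeasurableSpace Ω] {P : Measure Ω} [IsFiniteMeasure P]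
  {a b c d s : Ω → ℝ} {δ K : ℝ}

theorem eventually_integrable_ratioFamily (ha : Measurable a) (hb : Measurable b)
    (hc : Measurable c) (hd : Measurable d) (hs : Measurable s) (hδ : 0 < δ)
    (hbdd : ∀ᵐ ω ∂P, |a ω| ≤ K ∧ |b ω| ≤ K ∧ δ ≤ c ω ∧ |d ω| ≤ K ∧ |s ω| ≤ K) :
    ∀ᶠ t in 𝓝 0, Integrable (fun ω => ratioFamily (a ω) (b ω) (c ω) (d ω) (s ω) t) P := by
  filter_upwards [eventually_abs_mul_lt_half hδ K] with t ht
  refine Integrable.of_bound (by unfold ratioFamily; fun_prop : Measurable _).aestronglyMeasurable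
    ((K + δ / 2) / (δ / 2) * (1 + δ / 2)) ?_
  filter_upwards [hbdd] with ω ⟨ha, hb, hc, hd, hs⟩
  exact abs_ratioFamily_le hδ ha hb hc hd hs ht.le

theorem hasDerivAt_integral_ratioFamily (ha : Measurable a) (hb : Measurable b)
    (hc : Measurable c) (hd : Measurable d) (hs : Measurable s) (hδ : 0 < δ)
    (hbdd : ∀ᵐ ω ∂P, |a ω| ≤ K ∧ |b ω| ≤ K ∧ δ ≤ c ω ∧ c ω ≤ K ∧ |d ω| ≤ K ∧ |s ω| ≤ K) :
    HasDerivAt (fun t => ∫ ω, ratioFamily (a ω) (b ω) (c ω) (d ω) (s ω) t ∂P)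
      (∫ ω, ratioFamilyDeriv (a ω) (b ω) (c ω) (d ω) (s ω) 0 ∂P) 0 := by
  have hint := eventually_integrable_ratioFamily ha hb hc hd hs hδ
    (hbdd.mono fun _ ⟨ha, hb, hc, _, hd, hs⟩ => ⟨ha, hb, hc, hd, hs⟩)
  refine (hasDerivAt_integral_of_dominated_loc_of_deriv_le (eventually_abs_mul_lt_half hδ K)
    (hint.mono fun _ h => h.aestronglyMeasurable) hint.self_of_nhds
    (F' := fun t ω => ratioFamilyDeriv (a ω) (b ω) (c ω) (d ω) (s ω) t)
    (by unfold ratioFamilyDeriv; fun_prop : Measurable _).aestronglyMeasurable ?_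
    (integrable_const ((K * K + K * K) / (δ / 2) ^ 2 * (1 + δ / 2) + (K + δ / 2) / (δ / 2) * K))
    ?_).2
  · filter_upwards [hbdd] with ω ⟨ha, hb, hc, hc', hd, hs⟩ t ht
    exact abs_ratioFamilyDeriv_le hδ ha hb hc hc' hd hs ht.le
  · filter_upwards [hbdd] with ω ⟨_, _, hc, _, hd, _⟩ t ht
    exact hasDerivAt_ratioFamily ((half_pos hδ).trans_le (half_le_add_mul hc hd ht.le)).ne'

end IntegralRatioFamily

section CondExp

variable {Ω : Type*} {m m₀ : MeasurableSpace Ω} {P : Measure Ω}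

theorem integral_mul_condExp_of_abs_le [IsFiniteMeasure P] (hm : m ≤ m₀) {f X : Ω → ℝ}
    (hf : StronglyMeasurable[m] f) {c : ℝ} (hfc : ∀ᵐ ω ∂P, |f ω| ≤ c) (hX : Integrable X P) :
    ∫ ω, f ω * X ω ∂P = ∫ ω, f ω * P[X|m] ω ∂P :=
  calc ∫ ω, f ω * X ω ∂P = ∫ ω, P[f * X|m] ω ∂P := (integral_condExp hm).symm
    _ = ∫ ω, f ω * P[X|m] ω ∂P :=
      integral_congr_ae (condExp_stronglyMeasurable_mul_of_bound hm hf hX c hfc)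

theorem condExp_add_mul_ae_eq {X Z : Ω → ℝ} (hX : Integrable X P) (hZ : Integrable Z P) (t : ℝ) :
    P[fun ω => X ω + t * Z ω|m] =ᵐ[P] fun ω => P[X|m] ω + t * P[Z|m] ω := by
  filter_upwards [condExp_add hX (hZ.const_mul t) m, condExp_smul t Z m] with ω hadd hsmul
  exact hadd.trans (congrArg (P[X|m] ω + ·) hsmul)

theorem ae_abs_le_div_of_condExp_ae_eq_mul {X f p : Ω → ℝ} {C δ : ℝ} (hδ : 0 < δ)
    (hX : ∀ᵐ ω ∂P, |X ω| ≤ C) (hp : ∀ᵐ ω ∂P, δ ≤ p ω)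
    (hXf : P[X|m] =ᵐ[P] fun ω => f ω * p ω) : ∀ᵐ ω ∂P, |f ω| ≤ C / δ := by
  filter_upwards [ae_bdd_abs_condExp_of_ae_bdd_abs (m := m) hX, hp, hXf] with ω hC hpω hfω
  rw [hfω, abs_mul, abs_of_pos (hδ.trans_le hpω)] at hC
  rw [le_div_iff₀ hδ]
  nlinarith [abs_nonneg (f ω)]

theorem integral_sub_sub_mul_eq_of_integral_eq_zero {f₁ f₀ G : Ω → ℝ}
    (h₁ : Integrable (fun ω => f₁ ω * G ω) P) (h₀ : Integrable (fun ω => f₀ ω * G ω) P)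
    (hG : Integrable G P) (hG₀ : ∫ ω, G ω ∂P = 0) (c : ℝ) :
    ∫ ω, (f₁ ω - f₀ ω - c) * G ω ∂P = ∫ ω, f₁ ω * G ω ∂P - ∫ ω, f₀ ω * G ω ∂P := by
  have h : Integrable (fun ω => f₁ ω * G ω - f₀ ω * G ω) P := h₁.sub h₀
  calc ∫ ω, (f₁ ω - f₀ ω - c) * G ω ∂P = ∫ ω, f₁ ω * G ω - f₀ ω * G ω - c * G ω ∂P := by
        simp only [sub_mul]
    _ = ∫ ω, f₁ ω * G ω ∂P - ∫ ω, f₀ ω * G ω ∂P := by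
        rw [integral_sub h (hG.const_mul c), integral_const_mul, hG₀, mul_zero, sub_zero,
          integral_sub h₁ h₀]

theorem condExp_ite_ae_eq [IsFiniteMeasure P] (hm : m ≤ m₀) {A π : Ω → ℝ} (hA : Measurable A)
    (hA01 : ∀ ω, A ω = 0 ∨ A ω = 1)
    (hπ : P[fun ω => if A ω = 1 then (1 : ℝ) else 0|m] =ᵐ[P] π) {a : ℝ}
    (ha : a ∈ ({0, 1} : Set ℝ)) :
    P[fun ω => if A ω = a then (1 : ℝ) else 0|m] =ᵐ[P]
      fun ω => a * π ω + (1 - a) * (1 - π ω) := by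
  rcases ha with rfl | rfl
  · have hI0 : (fun ω => if A ω = 0 then (1 : ℝ) else 0) =
        (fun _ => (1 : ℝ)) - fun ω => if A ω = 1 then (1 : ℝ) else 0 := by
      funext ω
      rcases hA01 ω with h | h <;> simp [h]
    have hI1 : Integrable (fun ω => if A ω = 1 then (1 : ℝ) else 0) P :=
      .of_bound (Measurable.ite (hA (measurableSet_singleton 1)) measurable_const
        measurable_const).aestronglyMeasurable 1 (ae_of_all _ fun ω => by split_ifs <;> simp)
    rw [hI0]
    filter_upwards [condExp_sub (integrable_const (1 : ℝ)) hI1 m, hπ] with ω hsub hπω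
    rw [hsub, Pi.sub_apply, condExp_const hm, hπω]
    ring
  · filter_upwards [hπ] with ω hπω
    rw [hπω]
    ring

end CondExp

section Arm

variable {Ω : Type*}

/-- Regularity of treatment arm `a`, with `I = 1{A = a}`, `p = π₀ₐ(L)`, `μ = μ₀(L, a)` and `G` the
score of the submodel. -/
structure ArmRegularity (m : MeasurableSpace Ω) {m₀ : MeasurableSpace Ω} (P : Measure[m₀] Ω)
    (I Y G p μ : Ω → ℝ) (δ K : ℝ) : Prop where
  measurable_I : Measurable[m₀] I
  measurable_Y : Measurable[m₀] Y
  measurable_G : Measurable[m₀] G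
  abs_I_le : ∀ ω, |I ω| ≤ 1
  abs_Y_le : ∀ᵐ ω ∂P, |Y ω| ≤ K
  abs_G_le : ∀ᵐ ω ∂P, |G ω| ≤ K
  stronglyMeasurable_p : StronglyMeasurable[m] p
  δ_pos : 0 < δ
  p_mem : ∀ᵐ ω ∂P, δ ≤ p ω ∧ p ω ≤ 1
  stronglyMeasurable_μ : StronglyMeasurable[m] μ
  abs_μ_le : ∀ᵐ ω ∂P, |μ ω| ≤ K

/-- `μ_t(L, a) · w_t(L) = N_{t,a}(L) / D_{t,a}(L) · w_t(L)` along the submodel `(1 + tG)·P`, with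
the conditional expectations under the submodel expanded into conditional expectations under `P`. -/
noncomputable def armIntegrand (m : MeasurableSpace Ω) {m₀ : MeasurableSpace Ω} (P : Measure[m₀] Ω)
    (I Y G p μ : Ω → ℝ) (t : ℝ) (ω : Ω) : ℝ :=
  ratioFamily (μ ω * p ω) (P[fun ω => Y ω * G ω * I ω|m] ω) (p ω) (P[fun ω => G ω * I ω|m] ω)
    (P[G|m] ω) t

/-- The augmented inverse-probability-weighted outcome `mₐ(Z)`. -/
noncomputable def aipw (I Y p μ : Ω → ℝ) (ω : Ω) : ℝ :=
  I ω * (Y ω - μ ω) / p ω + μ ω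

namespace ArmRegularity

variable {m m₀ : MeasurableSpace Ω} {P : Measure Ω} {I Y G p μ : Ω → ℝ} {δ K : ℝ}

theorem integrable_G [IsFiniteMeasure P] (h : ArmRegularity m P I Y G p μ δ K) : Integrable G P :=
  .of_bound h.measurable_G.aestronglyMeasurable K h.abs_G_le

theorem integrable_GI [IsFiniteMeasure P] (h : ArmRegularity m P I Y G p μ δ K) :
    Integrable (fun ω => G ω * I ω) P :=
  h.integrable_G.mul_bdd h.measurable_I.aestronglyMeasurable (ae_of_all _ h.abs_I_le)

theorem integrable_YGI [IsFiniteMeasure P] (h : ArmRegularity m P I Y G p μ δ K) :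
    Integrable (fun ω => Y ω * G ω * I ω) P :=
  (h.integrable_G.bdd_mul h.measurable_Y.aestronglyMeasurable h.abs_Y_le).mul_bdd
    h.measurable_I.aestronglyMeasurable (ae_of_all _ h.abs_I_le)

theorem integrable_I [IsFiniteMeasure P] (h : ArmRegularity m P I Y G p μ δ K) : Integrable I P :=
  .of_bound h.measurable_I.aestronglyMeasurable 1 (ae_of_all _ h.abs_I_le)

theorem integrable_YI [IsFiniteMeasure P] (h : ArmRegularity m P I Y G p μ δ K) :
    Integrable (fun ω => Y ω * I ω) P :=
  h.integrable_I.bdd_mul h.measurable_Y.aestronglyMeasurable h.abs_Y_le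

theorem ae_div_mul_eq_armIntegrand [IsFiniteMeasure P] (h : ArmRegularity m P I Y G p μ δ K)
    (hm : m ≤ m₀) (hIp : P[I|m] =ᵐ[P] p)
    (hYI : P[fun ω => Y ω * I ω|m] =ᵐ[P] fun ω => μ ω * p ω) {t : ℝ} {n d w : Ω → ℝ}
    (hn : P[fun ω => Y ω * (1 + t * G ω) * I ω|m] =ᵐ[P] n)
    (hd : P[fun ω => (1 + t * G ω) * I ω|m] =ᵐ[P] d) (hw : P[fun ω => 1 + t * G ω|m] =ᵐ[P] w) :
    (fun ω => n ω / d ω * w ω) =ᵐ[P] armIntegrand m P I Y G p μ t := by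
  have hN : (fun ω => Y ω * (1 + t * G ω) * I ω) =
      fun ω => Y ω * I ω + t * (Y ω * G ω * I ω) := by
    funext ω; ring
  have hD : (fun ω => (1 + t * G ω) * I ω) = fun ω => I ω + t * (G ω * I ω) := by
    funext ω; ring
  rw [hN] at hn
  rw [hD] at hd
  filter_upwards [condExp_add_mul_ae_eq h.integrable_YI h.integrable_YGI t,
    condExp_add_mul_ae_eq h.integrable_I h.integrable_GI t,
    condExp_add_mul_ae_eq (integrable_const 1) h.integrable_G t, hIp, hYI, hn, hd, hw]
    with ω hNω hDω hwω hIpω hYIω hnω hdω hwω'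
  rw [← hnω, ← hdω, ← hwω', hNω, hDω, hwω, hIpω, hYIω, condExp_const hm]
  rfl

theorem ae_abs_inv_p_le (h : ArmRegularity m P I Y G p μ δ K) : ∀ᵐ ω ∂P, |(p ω)⁻¹| ≤ δ⁻¹ :=
  h.p_mem.mono fun _ hp => by
    rw [abs_inv, abs_of_pos (h.δ_pos.trans_le hp.1)]
    exact inv_anti₀ h.δ_pos hp.1

theorem integrable_inv_p_mul (h : ArmRegularity m P I Y G p μ δ K) (hm : m ≤ m₀) {X : Ω → ℝ}
    (hX : Integrable X P) : Integrable (fun ω => (p ω)⁻¹ * X ω) P :=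
  hX.bdd_mul ((h.stronglyMeasurable_p.mono hm).measurable.inv.aestronglyMeasurable)
    h.ae_abs_inv_p_le

theorem integrable_μ_mul (h : ArmRegularity m P I Y G p μ δ K) (hm : m ≤ m₀) {X : Ω → ℝ}
    (hX : Integrable X P) : Integrable (fun ω => μ ω * X ω) P :=
  hX.bdd_mul (h.stronglyMeasurable_μ.mono hm).aestronglyMeasurable h.abs_μ_le

theorem aipw_mul_eq (ω : Ω) : aipw I Y p μ ω * G ω =
    (p ω)⁻¹ * ((Y ω - μ ω) * G ω * I ω) + μ ω * G ω := by
  rw [aipw]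
  ring

theorem integrable_residual [IsFiniteMeasure P] (h : ArmRegularity m P I Y G p μ δ K)
    (hm : m ≤ m₀) : Integrable (fun ω => (Y ω - μ ω) * G ω * I ω) P :=
  (h.integrable_YGI.sub (h.integrable_μ_mul hm h.integrable_GI)).congr
    (ae_of_all _ fun ω => by simp only [Pi.sub_apply]; ring)

theorem integrable_aipw_mul [IsFiniteMeasure P] (h : ArmRegularity m P I Y G p μ δ K)
    (hm : m ≤ m₀) : Integrable (fun ω => aipw I Y p μ ω * G ω) P := by
  simp only [aipw_mul_eq]
  exact (h.integrable_inv_p_mul hm (h.integrable_residual hm)).add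
    (h.integrable_μ_mul hm h.integrable_G)

theorem condExp_residual_ae_eq [IsFiniteMeasure P] (h : ArmRegularity m P I Y G p μ δ K)
    (hm : m ≤ m₀) :
    P[fun ω => (Y ω - μ ω) * G ω * I ω|m] =ᵐ[P]
      fun ω => P[fun ω => Y ω * G ω * I ω|m] ω - μ ω * P[fun ω => G ω * I ω|m] ω := by
  have hsplit : (fun ω => (Y ω - μ ω) * G ω * I ω) =
      fun ω => Y ω * G ω * I ω - μ ω * (G ω * I ω) := by
    funext ω; ring
  rw [hsplit]
  filter_upwards [condExp_sub h.integrable_YGI (h.integrable_μ_mul hm h.integrable_GI) m,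
    condExp_stronglyMeasurable_mul_of_bound hm h.stronglyMeasurable_μ h.integrable_GI K
      h.abs_μ_le] with ω hsub hpull
  exact hsub.trans (congrArg (P[fun ω => Y ω * G ω * I ω|m] ω - ·) hpull)

theorem integral_ratioFamilyDeriv_eq [IsFiniteMeasure P] (h : ArmRegularity m P I Y G p μ δ K)
    (hm : m ≤ m₀) :
    ∫ ω, ratioFamilyDeriv (μ ω * p ω) (P[fun ω => Y ω * G ω * I ω|m] ω) (p ω)
        (P[fun ω => G ω * I ω|m] ω) (P[G|m] ω) 0 ∂P = ∫ ω, aipw I Y p μ ω * G ω ∂P := by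
  have hp_inv : StronglyMeasurable[m] fun ω => (p ω)⁻¹ :=
    (h.stronglyMeasurable_p.measurable.inv).stronglyMeasurable
  calc _ = ∫ ω, (p ω)⁻¹ * P[fun ω => (Y ω - μ ω) * G ω * I ω|m] ω + μ ω * P[G|m] ω ∂P := by
        refine integral_congr_ae ?_
        filter_upwards [h.condExp_residual_ae_eq hm, h.p_mem] with ω hres hp
        have : p ω ≠ 0 := (h.δ_pos.trans_le hp.1).ne'
        simp only [ratioFamilyDeriv, zero_mul, add_zero, mul_one, hres]
        field_simp
    _ = ∫ ω, (p ω)⁻¹ * ((Y ω - μ ω) * G ω * I ω) + μ ω * G ω ∂P := by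
        rw [integral_add (h.integrable_inv_p_mul hm integrable_condExp)
            (h.integrable_μ_mul hm integrable_condExp),
          integral_add (h.integrable_inv_p_mul hm (h.integrable_residual hm))
            (h.integrable_μ_mul hm h.integrable_G),
          integral_mul_condExp_of_abs_le hm hp_inv h.ae_abs_inv_p_le (h.integrable_residual hm),
          integral_mul_condExp_of_abs_le hm h.stronglyMeasurable_μ h.abs_μ_le h.integrable_G]
    _ = ∫ ω, aipw I Y p μ ω * G ω ∂P := by simp only [aipw_mul_eq]

theorem ae_coeff_bounds (h : ArmRegularity m P I Y G p μ δ K) :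
    ∀ᵐ ω ∂P, |μ ω * p ω| ≤ (K + 1) ^ 2 ∧ |P[fun ω => Y ω * G ω * I ω|m] ω| ≤ (K + 1) ^ 2 ∧
      δ ≤ p ω ∧ p ω ≤ (K + 1) ^ 2 ∧ |P[fun ω => G ω * I ω|m] ω| ≤ (K + 1) ^ 2 ∧
      |P[G|m] ω| ≤ (K + 1) ^ 2 := by
  have hYGI : ∀ᵐ ω ∂P, |Y ω * G ω * I ω| ≤ K * K * 1 := by
    filter_upwards [h.abs_Y_le, h.abs_G_le] with ω hY hG
    have hK : 0 ≤ K := (abs_nonneg _).trans hG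
    have := h.abs_I_le ω
    rw [abs_mul, abs_mul]
    bound
  have hGI : ∀ᵐ ω ∂P, |G ω * I ω| ≤ K * 1 := by
    filter_upwards [h.abs_G_le] with ω hG
    have hK : 0 ≤ K := (abs_nonneg _).trans hG
    have := h.abs_I_le ω
    rw [abs_mul]
    bound
  filter_upwards [h.abs_μ_le, h.p_mem, h.abs_G_le, ae_bdd_abs_condExp_of_ae_bdd_abs (m := m) hYGI,
    ae_bdd_abs_condExp_of_ae_bdd_abs (m := m) hGI,
    ae_bdd_abs_condExp_of_ae_bdd_abs (m := m) h.abs_G_le] with ω hμ hp hG hq hr hs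
  have hK : 0 ≤ K := (abs_nonneg _).trans hG
  have hμp : |μ ω * p ω| ≤ K := by
    rw [abs_mul, abs_of_pos (h.δ_pos.trans_le hp.1)]
    nlinarith [abs_nonneg (μ ω)]
  refine ⟨?_, ?_, hp.1, ?_, ?_, ?_⟩ <;> nlinarith

theorem eventually_integrable_armIntegrand [IsFiniteMeasure P]
    (h : ArmRegularity m P I Y G p μ δ K) (hm : m ≤ m₀) :
    ∀ᶠ t in 𝓝 0, Integrable (armIntegrand m P I Y G p μ t) P :=
  eventually_integrable_ratioFamily
    ((h.stronglyMeasurable_μ.mul h.stronglyMeasurable_p).mono hm).measurable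
    (stronglyMeasurable_condExp.mono hm).measurable (h.stronglyMeasurable_p.mono hm).measurable
    (stronglyMeasurable_condExp.mono hm).measurable (stronglyMeasurable_condExp.mono hm).measurable
    h.δ_pos (h.ae_coeff_bounds.mono fun _ ⟨ha, hb, hc, _, hd, hs⟩ => ⟨ha, hb, hc, hd, hs⟩)

theorem hasDerivAt_integral_armIntegrand [IsFiniteMeasure P]
    (h : ArmRegularity m P I Y G p μ δ K) (hm : m ≤ m₀) :
    HasDerivAt (fun t => ∫ ω, armIntegrand m P I Y G p μ t ω ∂P)
      (∫ ω, aipw I Y p μ ω * G ω ∂P) 0 :=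
  h.integral_ratioFamilyDeriv_eq hm ▸ hasDerivAt_integral_ratioFamily
    ((h.stronglyMeasurable_μ.mul h.stronglyMeasurable_p).mono hm).measurable
    (stronglyMeasurable_condExp.mono hm).measurable (h.stronglyMeasurable_p.mono hm).measurable
    (stronglyMeasurable_condExp.mono hm).measurable (stronglyMeasurable_condExp.mono hm).measurable
    h.δ_pos h.ae_coeff_bounds

end ArmRegularity

end Arm

theorem armRegularity_comap {Ω 𝓛 : Type*} [MeasurableSpace Ω] [MeasurableSpace 𝓛]
    {P : Measure Ω} {L : Ω → 𝓛} {A Y : Ω → ℝ} (hL : Measurable L) (hA : Measurable A)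
    (hY : Measurable Y) {C : ℝ} (hYbdd : ∀ᵐ ω ∂P, |Y ω| ≤ C) {δ : ℝ} (hδ : 0 < δ) {π₀ : 𝓛 → ℝ}
    (hπ₀ : Measurable π₀) (hπ₀bdd : ∀ l, δ ≤ π₀ l ∧ π₀ l ≤ 1 - δ) {μ₀ : 𝓛 → ℝ → ℝ}
    (hμ₀ : Measurable fun p : 𝓛 × ℝ => μ₀ p.1 p.2) {g : 𝓛 × ℝ × ℝ → ℝ} (hg : Measurable g)
    {M : ℝ} (hgbdd : ∀ x, |g x| ≤ M) {a : ℝ} (ha : a ∈ ({0, 1} : Set ℝ))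
    (hreg : P[(fun ω => Y ω * (if A ω = a then (1 : ℝ) else 0)) |
          MeasurableSpace.comap L inferInstance]
        =ᵐ[P] fun ω => μ₀ (L ω) a * (a * π₀ (L ω) + (1 - a) * (1 - π₀ (L ω)))) :
    ArmRegularity (MeasurableSpace.comap L inferInstance) P (fun ω => if A ω = a then 1 else 0) Y
      (fun ω => g (L ω, A ω, Y ω)) (fun ω => a * π₀ (L ω) + (1 - a) * (1 - π₀ (L ω)))
      (fun ω => μ₀ (L ω) a) δ (max (max C M) (C / δ)) := by
  have hp_mem : ∀ ω, δ ≤ a * π₀ (L ω) + (1 - a) * (1 - π₀ (L ω)) ∧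
      a * π₀ (L ω) + (1 - a) * (1 - π₀ (L ω)) ≤ 1 := fun ω => by
    obtain ⟨h1, h2⟩ := hπ₀bdd (L ω)
    rcases ha with rfl | rfl <;> constructor <;> linarith
  exact
    { measurable_I := Measurable.ite (hA (measurableSet_singleton a)) measurable_const
        measurable_const
      measurable_Y := hY
      measurable_G := hg.comp (hL.prodMk (hA.prodMk hY))
      abs_I_le := fun ω => by split_ifs <;> simp
      abs_Y_le := hYbdd.mono fun ω h => h.trans ((le_max_left _ _).trans (le_max_left _ _))
      abs_G_le := ae_of_all _ fun ω => (hgbdd _).trans ((le_max_right _ _).trans (le_max_left _ _))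
      stronglyMeasurable_p :=
        ((by fun_prop : Measurable fun l => a * π₀ l + (1 - a) * (1 - π₀ l)).comp
          (comap_measurable L)).stronglyMeasurable
      δ_pos := hδ
      p_mem := ae_of_all _ hp_mem
      stronglyMeasurable_μ :=
        ((hμ₀.comp (measurable_id.prodMk measurable_const)).comp
          (comap_measurable L)).stronglyMeasurable
      abs_μ_le := (ae_abs_le_div_of_condExp_ae_eq_mul hδ
        (hYbdd.mono fun ω h => by split_ifs <;> simp [h, (abs_nonneg _).trans h])
        (ae_of_all _ fun ω => (hp_mem ω).1) hreg).mono fun ω h => h.trans (le_max_right _ _) }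

/-- Along every bounded mean-zero multiplicative parametric submodel
`dP_ε = (1 + ε·g(Z))·dP`, the g-computation functional
`ψ(ε) = E[(μ_ε(L,1) − μ_ε(L,0))·w_ε(L)]` is differentiable at `ε = 0` with derivative
`ψ'(0) = E[φ(Z)·g(Z)]`, where `φ(Z) = m₁(Z) − m₀(Z) − ψ(0)` and
`mₐ(Z) = 1{A=a}·(Y − μ₀(L,a))/π₀ₐ(L) + μ₀(L,a)`: the centered doubly robust function
satisfies the pathwise-derivative property of the efficient influence function. -/
theorem efficient_influence_function_pathwise_derivative
    {Ω 𝓛 : Type*} [MeasurableSpace Ω] [MeasurableSpace 𝓛]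
    (P : Measure Ω) [IsProbabilityMeasure P]
    (L : Ω → 𝓛) (A Y : Ω → ℝ)
    (hL : Measurable L) (hA : Measurable A) (hY : Measurable Y)
    (hA01 : ∀ ω, A ω = 0 ∨ A ω = 1)
    -- Y is bounded: |Y| ≤ C a.s.
    (C : ℝ) (hYbdd : ∀ᵐ ω ∂P, |Y ω| ≤ C)
    -- propensity score π₀ : 𝓛 → [δ, 1−δ], a version of P(A = 1 ∣ σ(L))
    (δ : ℝ) (hδ : 0 < δ)
    (π₀ : 𝓛 → ℝ) (hπ₀ : Measurable π₀)
    (hπ₀bdd : ∀ l, δ ≤ π₀ l ∧ π₀ l ≤ 1 - δ)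
    (hps : P[(fun ω => if A ω = 1 then (1 : ℝ) else 0) |
        MeasurableSpace.comap L inferInstance] =ᵐ[P] fun ω => π₀ (L ω))
    -- outcome regression: E[Y·1{A=a} ∣ σ(L)] = μ₀(L,a)·π₀ₐ(L) a.s. for a = 0, 1
    (μ₀ : 𝓛 → ℝ → ℝ) (hμ₀ : Measurable fun p : 𝓛 × ℝ => μ₀ p.1 p.2)
    (hreg : ∀ a ∈ ({0, 1} : Set ℝ),
      P[(fun ω => Y ω * (if A ω = a then (1 : ℝ) else 0)) |
          MeasurableSpace.comap L inferInstance]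
        =ᵐ[P] fun ω => μ₀ (L ω) a * (a * π₀ (L ω) + (1 - a) * (1 - π₀ (L ω))))
    -- the score g of the submodel: bounded and mean zero
    (g : 𝓛 × ℝ × ℝ → ℝ) (hg : Measurable g)
    (M : ℝ) (hM : 0 < M) (hgbdd : ∀ x, |g x| ≤ M)
    (hgmean : ∫ ω, g (L ω, A ω, Y ω) ∂P = 0)
    -- fixed versions of the conditional expectations defining the submodel functionals
    (w : ℝ → 𝓛 → ℝ) (D N : ℝ → ℝ → 𝓛 → ℝ)
    (hw : ∀ ε : ℝ, |ε| < 1 / M → Measurable (w ε) ∧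
      P[(fun ω => 1 + ε * g (L ω, A ω, Y ω)) |
          MeasurableSpace.comap L inferInstance] =ᵐ[P] fun ω => w ε (L ω))
    (hD : ∀ ε : ℝ, |ε| < 1 / M → ∀ a ∈ ({0, 1} : Set ℝ), Measurable (D ε a) ∧
      P[(fun ω => (1 + ε * g (L ω, A ω, Y ω)) * (if A ω = a then (1 : ℝ) else 0)) |
          MeasurableSpace.comap L inferInstance] =ᵐ[P] fun ω => D ε a (L ω))
    (hN : ∀ ε : ℝ, |ε| < 1 / M → ∀ a ∈ ({0, 1} : Set ℝ), Measurable (N ε a) ∧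
      P[(fun ω => Y ω * (1 + ε * g (L ω, A ω, Y ω)) * (if A ω = a then (1 : ℝ) else 0)) |
          MeasurableSpace.comap L inferInstance] =ᵐ[P] fun ω => N ε a (L ω))
    -- the g-computation functional ψ(ε) = E[(μ_ε(L,1) − μ_ε(L,0))·w_ε(L)],
    -- with μ_ε(L,a) = N_{ε,a}(L)/D_{ε,a}(L)
    (ψ : ℝ → ℝ)
    (hψ : ∀ ε : ℝ, ψ ε =
      ∫ ω, (N ε 1 (L ω) / D ε 1 (L ω) - N ε 0 (L ω) / D ε 0 (L ω)) * w ε (L ω) ∂P) :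
    HasDerivAt ψ
      (∫ ω,
        (((if A ω = 1 then (1 : ℝ) else 0) * (Y ω - μ₀ (L ω) 1) / π₀ (L ω) + μ₀ (L ω) 1)
          - ((if A ω = 0 then (1 : ℝ) else 0) * (Y ω - μ₀ (L ω) 0) / (1 - π₀ (L ω))
              + μ₀ (L ω) 0)
          - ψ 0) * g (L ω, A ω, Y ω) ∂P)
      0 := by
  have hm : MeasurableSpace.comap L inferInstance ≤ ‹MeasurableSpace Ω› := hL.comap_le
  have h1 : (1 : ℝ) ∈ ({0, 1} : Set ℝ) := by simp
  have h0 : (0 : ℝ) ∈ ({0, 1} : Set ℝ) := by simp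
  have harm := fun a (ha : a ∈ ({0, 1} : Set ℝ)) =>
    armRegularity_comap hL hA hY hYbdd hδ hπ₀ hπ₀bdd hμ₀ hg hgbdd ha (hreg a ha)
  have hplug := fun a (ha : a ∈ ({0, 1} : Set ℝ)) ε (hε : |ε| < 1 / M) =>
    (harm a ha).ae_div_mul_eq_armIntegrand hm (condExp_ite_ae_eq hm hA hA01 hps ha) (hreg a ha)
      (hN ε hε a ha).2 (hD ε hε a ha).2 (hw ε hε).2
  refine (((harm 1 h1).hasDerivAt_integral_armIntegrand hm).sub
    ((harm 0 h0).hasDerivAt_integral_armIntegrand hm)).congr_of_eventuallyEq ?_ |>.congr_deriv ?_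
  · filter_upwards [eventually_abs_sub_lt (0 : ℝ) (one_div_pos.2 hM),
      (harm 1 h1).eventually_integrable_armIntegrand hm,
      (harm 0 h0).eventually_integrable_armIntegrand hm] with ε hε hint1 hint0
    rw [sub_zero] at hε
    rw [hψ ε, Pi.sub_apply, ← integral_sub hint1 hint0]
    refine integral_congr_ae ?_
    filter_upwards [hplug 1 h1 ε hε, hplug 0 h0 ε hε] with ω h1ω h0ω
    rw [sub_mul, h1ω, h0ω]
  · rw [← integral_sub_sub_mul_eq_of_integral_eq_zero ((harm 1 h1).integrable_aipw_mul hm)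
      ((harm 0 h0).integrable_aipw_mul hm) (harm 1 h1).integrable_G hgmean (ψ 0)]
    refine integral_congr_ae (ae_of_all _ fun ω => ?_)
    simp only [aipw]
    ring
end

section
/- Suppose Y = Y¹ almost surely on the event {A = 1}, A and Y¹ are conditionally independent given σ(L), positivity holds (π₀(L) ≥ δ > 0 almost surely), and Y¹ is integrable. Let V = v(L) for a measurable map v : 𝓛 → 𝒱, and let g : 𝒱 → ℝ be bounded measurable and γ : 𝒱 → ℝ measurable with γ(V) integrable. Then the inverse-probability-weighted observed-data estimating function has the same mean as the full-data estimating function: E[ (A/π₀(L)) · g(V) · (Y − γ(V)) ] = E[ g(V) · (Y¹ − γ(V)) ]. In particular, if the full-data estimating function g(V)(Y¹ − γ(V)) has mean zero, so does its inverse-probability-weighted observed-data counterpart. -/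
/-!
Condition on `σ(L)`. The weight `g(V) / π₀(L)` and `γ(V)` are `σ(L)`-measurable, and conditional
independence of `A` and `Y¹` gives `E[A (Y¹ - γ(V)) | L] = π₀(L) · E[Y¹ - γ(V) | L]`, so the
propensity score cancels against the weight and the tower property leaves `E[g(V) (Y¹ - γ(V))]`.
The product formula for conditional expectations comes from the conditional expectation kernel:
for almost every `ω`, `A` and `Y¹` are independent under `condExpKernel P σ(L) ω`.
-/

open MeasureTheory ProbabilityTheory

section CondIndepFun

variable {Ω : Type*} {m mΩ : MeasurableSpace Ω} [StandardBorelSpace Ω] {hm : m ≤ mΩ}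
  {μ : Measure Ω} [IsFiniteMeasure μ]

theorem ProbabilityTheory.CondIndepFun.ae_indepFun_condExpKernel_s9 {β β' : Type*}
    {mβ : MeasurableSpace β} {mβ' : MeasurableSpace β'}
    [MeasurableSpace.CountableOrCountablyGenerated Ω (β × β')]
    {f : Ω → β} {g : Ω → β'} (hfg : CondIndepFun m hm f g μ) (hf : Measurable f)
    (hg : Measurable g) :
    ∀ᵐ ω ∂μ, IndepFun f g (condExpKernel μ m ω) := by
  filter_upwards [ae_of_ae_trim hm ((condIndepFun_iff_map_prod_eq_prod_map_map hf hg).1 hfg)]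
    with ω hω
  rw [indepFun_iff_map_prod_eq_prod_map_map hf.aemeasurable hg.aemeasurable]
  simpa only [Kernel.map_apply _ (hf.prodMk hg), Kernel.prod_apply, Kernel.map_apply _ hf,
    Kernel.map_apply _ hg] using hω

theorem ProbabilityTheory.CondIndepFun.condExp_mul_ae_eq_s9 {f g : Ω → ℝ}
    (hfg : CondIndepFun m hm f g μ) (hf : Measurable f) (hg : Measurable g)
    (hfi : Integrable f μ) (hgi : Integrable g μ) (hfgi : Integrable (f * g) μ) :
    μ[f * g | m] =ᵐ[μ] μ[f | m] * μ[g | m] := by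
  filter_upwards [condExp_ae_eq_integral_condExpKernel hm hfgi,
    condExp_ae_eq_integral_condExpKernel hm hfi, condExp_ae_eq_integral_condExpKernel hm hgi,
    hfg.ae_indepFun_condExpKernel_s9 hf hg] with ω hfgω hfω hgω hindep
  rw [hfgω, Pi.mul_apply, hfω, hgω]
  exact hindep.integral_mul_eq_mul_integral hf.aestronglyMeasurable hg.aestronglyMeasurable

theorem ProbabilityTheory.CondIndepFun.condExp_mul_sub_ae_eq {f g h : Ω → ℝ} {C : ℝ}
    (hfg : CondIndepFun m hm f g μ) (hf : Measurable f) (hg : Measurable g)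
    (hf_bdd : ∀ᵐ ω ∂μ, ‖f ω‖ ≤ C) (hgi : Integrable g μ) (hh : StronglyMeasurable[m] h)
    (hhi : Integrable h μ) :
    μ[f * (g - h) | m] =ᵐ[μ] μ[f | m] * μ[g - h | m] := by
  have hfi : Integrable f μ := by
    simpa using (integrable_const (1 : ℝ)).bdd_mul hf.aestronglyMeasurable hf_bdd
  have hfgi : Integrable (f * g) μ := hgi.bdd_mul hf.aestronglyMeasurable hf_bdd
  have hfhi : Integrable (f * h) μ := hhi.bdd_mul hf.aestronglyMeasurable hf_bdd
  filter_upwards [condExp_sub hfgi hfhi m, condExp_sub hgi hhi m,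
    hfg.condExp_mul_ae_eq_s9 hf hg hfi hgi hfgi,
    condExp_mul_of_stronglyMeasurable_right hh hfhi hfi] with ω hsub₁ hsub₂ hprod hpull
  simp only [mul_sub, Pi.mul_apply, Pi.sub_apply] at hsub₁ hsub₂ hprod hpull ⊢
  rw [hsub₁, hprod, hpull, hsub₂, condExp_of_stronglyMeasurable hm hh hhi]
  ring

end CondIndepFun

theorem MeasureTheory.integral_mul_condExp_of_stronglyMeasurable {Ω : Type*}
    {m mΩ : MeasurableSpace Ω} (hm : m ≤ mΩ) {μ : Measure Ω} [SigmaFinite (μ.trim hm)]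
    {f g : Ω → ℝ} (hf : StronglyMeasurable[m] f) (hfg : Integrable (f * g) μ)
    (hg : Integrable g μ) :
    ∫ ω, f ω * μ[g | m] ω ∂μ = ∫ ω, f ω * g ω ∂μ :=
  calc ∫ ω, f ω * μ[g | m] ω ∂μ = ∫ ω, μ[f * g | m] ω ∂μ :=
        integral_congr_ae (condExp_mul_of_stronglyMeasurable_left hf hfg hg).symm
    _ = ∫ ω, f ω * g ω ∂μ := integral_condExp hm

theorem integral_ipw_eq_integral_full_data {Ω : Type*} {m mΩ : MeasurableSpace Ω}
    [StandardBorelSpace Ω] (hm : m ≤ mΩ) {μ : Measure Ω} [IsFiniteMeasure μ]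
    {A Y Y1 π G Γ : Ω → ℝ} {C δ : ℝ} (hA : Measurable A) (hY1 : Measurable Y1)
    (hA01 : ∀ ω, A ω = 0 ∨ A ω = 1) (hcons : ∀ᵐ ω ∂μ, A ω = 1 → Y ω = Y1 ω)
    (hindep : CondIndepFun m hm A Y1 μ) (hπ : μ[A | m] =ᵐ[μ] π) (hπm : StronglyMeasurable[m] π)
    (hδ : 0 < δ) (hpos : ∀ᵐ ω ∂μ, δ ≤ π ω) (hY1i : Integrable Y1 μ)
    (hG : StronglyMeasurable[m] G) (hG_bdd : ∀ᵐ ω ∂μ, ‖G ω‖ ≤ C)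
    (hΓ : StronglyMeasurable[m] Γ) (hΓi : Integrable Γ μ) :
    ∫ ω, A ω / π ω * G ω * (Y ω - Γ ω) ∂μ = ∫ ω, G ω * (Y1 ω - Γ ω) ∂μ := by
  have hA_bdd : ∀ᵐ ω ∂μ, ‖A ω‖ ≤ 1 :=
    ae_of_all _ fun ω => by rcases hA01 ω with h | h <;> simp [h]
  have hW_bdd : ∀ᵐ ω ∂μ, ‖G ω / π ω‖ ≤ C / δ := by
    filter_upwards [hG_bdd, hpos] with ω hGω hπω
    rw [norm_div, Real.norm_of_nonneg (hδ.le.trans hπω)]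
    exact div_le_div₀ ((norm_nonneg _).trans hGω) hGω hδ hπω
  have hZi : Integrable (Y1 - Γ) μ := hY1i.sub hΓi
  have hAZi : Integrable (A * (Y1 - Γ)) μ := hZi.bdd_mul hA.aestronglyMeasurable hA_bdd
  have hcond : μ[A * (Y1 - Γ) | m] =ᵐ[μ] π * μ[Y1 - Γ | m] :=
    (hindep.condExp_mul_sub_ae_eq hA hY1 hA_bdd hY1i hΓ hΓi).trans (hπ.mul .rfl)
  calc ∫ ω, A ω / π ω * G ω * (Y ω - Γ ω) ∂μ = ∫ ω, (G / π) ω * (A * (Y1 - Γ)) ω ∂μ := by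
        refine integral_congr_ae ?_
        filter_upwards [hcons] with ω hω
        rcases hA01 ω with h | h
        · simp [h]
        · simp only [h, hω h, Pi.mul_apply, Pi.sub_apply, Pi.div_apply]
          ring
    _ = ∫ ω, (G / π) ω * μ[A * (Y1 - Γ) | m] ω ∂μ :=
        (integral_mul_condExp_of_stronglyMeasurable hm (hG.div hπm)
          (hAZi.bdd_mul ((hG.div hπm).mono hm).aestronglyMeasurable hW_bdd) hAZi).symm
    _ = ∫ ω, G ω * μ[Y1 - Γ | m] ω ∂μ := by
        refine integral_congr_ae ?_
        filter_upwards [hcond, hpos] with ω hω hπω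
        rw [hω, Pi.mul_apply, Pi.div_apply]
        field_simp [(hδ.trans_le hπω).ne']
    _ = ∫ ω, G ω * (Y1 ω - Γ ω) ∂μ :=
        integral_mul_condExp_of_stronglyMeasurable hm hG
          (hZi.bdd_mul (hG.mono hm).aestronglyMeasurable hG_bdd) hZi

theorem ipw_full_data_estimating_function_general
    {Ω 𝓛 𝒱 : Type*} [MeasurableSpace Ω] [StandardBorelSpace Ω]
    [MeasurableSpace 𝓛] [MeasurableSpace 𝒱]
    (P : Measure Ω) [IsProbabilityMeasure P]
    (L : Ω → 𝓛) (A Y Y1 : Ω → ℝ)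
    (hL : Measurable L) (hA : Measurable A) (hY1 : Measurable Y1)
    (hA01 : ∀ ω, A ω = 0 ∨ A ω = 1)
    -- Y = Y¹ a.s. on the event {A = 1}
    (hcons : ∀ᵐ ω ∂P, A ω = 1 → Y ω = Y1 ω)
    -- A and Y¹ are conditionally independent given σ(L)
    (hindep : CondIndepFun (MeasurableSpace.comap L inferInstance) hL.comap_le A Y1 P)
    -- π₀(L) is a version of P(A = 1 ∣ σ(L))
    (π₀ : 𝓛 → ℝ) (hπ₀ : Measurable π₀)
    (hps : P[(fun ω => if A ω = 1 then (1 : ℝ) else 0) |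
        MeasurableSpace.comap L inferInstance] =ᵐ[P] fun ω => π₀ (L ω))
    -- positivity: π₀(L) ≥ δ > 0 a.s.
    (δ : ℝ) (hδ : 0 < δ) (hpos : ∀ᵐ ω ∂P, δ ≤ π₀ (L ω))
    -- Y¹ is integrable
    (hY1int : Integrable Y1 P)
    -- V = v(L) for measurable v, g bounded measurable, γ measurable with γ(V) integrable
    (v : 𝓛 → 𝒱) (hv : Measurable v)
    (g : 𝒱 → ℝ) (hg : Measurable g) (hgbdd : ∃ C, ∀ x, |g x| ≤ C)
    (γ : 𝒱 → ℝ) (hγ : Measurable γ) (hγint : Integrable (fun ω => γ (v (L ω))) P) :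
    (∫ ω, (A ω / π₀ (L ω)) * g (v (L ω)) * (Y ω - γ (v (L ω))) ∂P
        = ∫ ω, g (v (L ω)) * (Y1 ω - γ (v (L ω))) ∂P)
    ∧ ((∫ ω, g (v (L ω)) * (Y1 ω - γ (v (L ω))) ∂P = 0) →
        ∫ ω, (A ω / π₀ (L ω)) * g (v (L ω)) * (Y ω - γ (v (L ω))) ∂P = 0) := by
  obtain ⟨C, hC⟩ := hgbdd
  have hLm : Measurable[MeasurableSpace.comap L inferInstance] L := comap_measurable L
  have hA_ind : (fun ω => if A ω = 1 then (1 : ℝ) else 0) = A := by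
    funext ω
    rcases hA01 ω with h | h <;> simp [h]
  have key := integral_ipw_eq_integral_full_data hL.comap_le hA hY1 hA01 hcons hindep
    (hA_ind ▸ hps) (hπ₀.comp hLm).stronglyMeasurable hδ hpos hY1int
    ((hg.comp hv).comp hLm).stronglyMeasurable
    (ae_of_all _ fun ω => (Real.norm_eq_abs _).trans_le (hC _))
    ((hγ.comp hv).comp hLm).stronglyMeasurable hγint
  exact ⟨key, fun h => key.trans h⟩

/-- Mapping a full-data estimating function to an observed-data,
inverse-probability-weighted estimating function: under `Y = Y¹` a.s. on `{A = 1}`,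
conditional ignorability and positivity,
`E[(A/π₀(L))·g(V)·(Y − γ(V))] = E[g(V)·(Y¹ − γ(V))]` for `V = v(L)`; in particular the
observed-data estimating function has mean zero whenever the full-data one does. -/
theorem ipw_full_data_estimating_function
    {Ω 𝓛 𝒱 : Type*} [MeasurableSpace Ω] [StandardBorelSpace Ω] [Nonempty Ω]
    [MeasurableSpace 𝓛] [MeasurableSpace 𝒱]
    (P : Measure Ω) [IsProbabilityMeasure P]
    (L : Ω → 𝓛) (A Y Y1 : Ω → ℝ)
    (hL : Measurable L) (hA : Measurable A) (hY : Measurable Y) (hY1 : Measurable Y1)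
    (hA01 : ∀ ω, A ω = 0 ∨ A ω = 1)
    -- Y = Y¹ a.s. on the event {A = 1}
    (hcons : ∀ᵐ ω ∂P, A ω = 1 → Y ω = Y1 ω)
    -- A and Y¹ are conditionally independent given σ(L)
    (hindep : CondIndepFun (MeasurableSpace.comap L inferInstance) hL.comap_le A Y1 P)
    -- π₀(L) is a version of P(A = 1 ∣ σ(L))
    (π₀ : 𝓛 → ℝ) (hπ₀ : Measurable π₀) (hπ₀01 : ∀ l, 0 ≤ π₀ l ∧ π₀ l ≤ 1)
    (hps : P[(fun ω => if A ω = 1 then (1 : ℝ) else 0) |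
        MeasurableSpace.comap L inferInstance] =ᵐ[P] fun ω => π₀ (L ω))
    -- positivity: π₀(L) ≥ δ > 0 a.s.
    (δ : ℝ) (hδ : 0 < δ) (hpos : ∀ᵐ ω ∂P, δ ≤ π₀ (L ω))
    -- Y¹ is integrable
    (hY1int : Integrable Y1 P)
    -- V = v(L) for measurable v, g bounded measurable, γ measurable with γ(V) integrable
    (v : 𝓛 → 𝒱) (hv : Measurable v)
    (g : 𝒱 → ℝ) (hg : Measurable g) (hgbdd : ∃ C, ∀ x, |g x| ≤ C)
    (γ : 𝒱 → ℝ) (hγ : Measurable γ) (hγint : Integrable (fun ω => γ (v (L ω))) P) :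
    (∫ ω, (A ω / π₀ (L ω)) * g (v (L ω)) * (Y ω - γ (v (L ω))) ∂P
        = ∫ ω, g (v (L ω)) * (Y1 ω - γ (v (L ω))) ∂P)
    ∧ ((∫ ω, g (v (L ω)) * (Y1 ω - γ (v (L ω))) ∂P = 0) →
        ∫ ω, (A ω / π₀ (L ω)) * g (v (L ω)) * (Y ω - γ (v (L ω))) ∂P = 0) :=
  ipw_full_data_estimating_function_general P L A Y Y1 hL hA hY1 hA01 hcons hindep π₀ hπ₀ hps δ hδ
    hpos hY1int v hv g hg hgbdd γ hγ hγint
end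

section
/- Suppose Y is integrable and positivity holds (δ ≤ π₀(L) ≤ 1−δ almost surely for some δ > 0). Fix a ∈ {0,1}. (i) For every measurable μ̄ : 𝓛 × {0,1} → ℝ with μ̄(L,a) integrable, E[ mₐ(Z; π₀, μ̄) ] = E[ μ₀(L,a) ]. (ii) For every measurable π̄ : 𝓛 → [0,1] with π̄ₐ(L) ≥ δ' > 0 almost surely (where π̄ₐ(L) = a·π̄(L) + (1−a)(1−π̄(L))), and with μ₀(L,a) integrable, E[ mₐ(Z; π̄, μ₀) ] = E[ μ₀(L,a) ]. That is, the doubly robust estimating function is an unbiased estimating function for E[μ₀(L,a)] if either the propensity score or the outcome regression is correctly specified. -/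
/-!
Conditionally on `L`, `E[1{A=a}(Y - μ̄(L,a)) | L] = (μ₀(L,a) - μ̄(L,a)) π₀ₐ(L)`, and the
`σ(L)`-measurable weight `1/π̄ₐ(L)` can be pulled out of the conditional expectation, so
`E[mₐ(Z; π̄, μ̄)] = E[μ̄(L,a)] + E[(μ₀(L,a) - μ̄(L,a)) π₀ₐ(L) / π̄ₐ(L)]`.
The bias term vanishes when `π̄ = π₀` (the ratio is `1`) and when `μ̄ = μ₀`.
-/

open MeasureTheory ProbabilityTheory

section CondExp

variable {Ω : Type*} {m mΩ : MeasurableSpace Ω} {μ : Measure Ω}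

theorem integral_mul_condExp_of_aestronglyMeasurable_left (hm : m ≤ mΩ)
    [SigmaFinite (μ.trim hm)] {f g : Ω → ℝ} (hf : AEStronglyMeasurable[m] f μ)
    (hfg : Integrable (f * g) μ) (hg : Integrable g μ) :
    ∫ ω, f ω * (μ[g|m]) ω ∂μ = ∫ ω, f ω * g ω ∂μ :=
  calc ∫ ω, f ω * (μ[g|m]) ω ∂μ = ∫ ω, (μ[f * g|m]) ω ∂μ :=
        integral_congr_ae (condExp_mul_of_aestronglyMeasurable_left hf hfg hg).symm
    _ = ∫ ω, f ω * g ω ∂μ := integral_condExp hm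

theorem integrable_of_integrable_mul_of_le {r e : Ω → ℝ} {δ : ℝ} (hδ : 0 < δ)
    (hr : AEStronglyMeasurable r μ) (hre : Integrable (fun ω => r ω * e ω) μ)
    (he : ∀ᵐ ω ∂μ, δ ≤ e ω) : Integrable r μ := by
  refine (hre.norm.const_mul δ⁻¹).mono' hr ?_
  filter_upwards [he] with ω heω
  rw [Real.norm_eq_abs, Real.norm_eq_abs, abs_mul, abs_of_pos (hδ.trans_le heω), ← div_eq_inv_mul,
    le_div_iff₀ hδ]
  exact mul_le_mul_of_nonneg_left heω (abs_nonneg _)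

variable [IsFiniteMeasure μ]

theorem condExp_indicator_binary (hm : m ≤ mΩ) {A p : Ω → ℝ} (hA01 : ∀ ω, A ω = 0 ∨ A ω = 1)
    (hA : Measurable A) (hp : μ[fun ω => if A ω = 1 then (1 : ℝ) else 0|m] =ᵐ[μ] p) {a : ℝ}
    (ha : a ∈ ({0, 1} : Set ℝ)) :
    μ[fun ω => if A ω = a then (1 : ℝ) else 0|m] =ᵐ[μ] fun ω => a * p ω + (1 - a) * (1 - p ω) := by
  rcases ha with rfl | rfl
  · have hA1 : Integrable (fun ω => if A ω = 1 then (1 : ℝ) else 0) μ :=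
      Integrable.of_bound (Measurable.ite (hA (measurableSet_singleton 1)) measurable_const
        measurable_const).aestronglyMeasurable 1 (ae_of_all _ fun ω => by split_ifs <;> simp)
    have hA0 : (fun ω => if A ω = 0 then (1 : ℝ) else 0)
        = (fun _ => (1 : ℝ)) - fun ω => if A ω = 1 then (1 : ℝ) else 0 := by
      ext ω
      rcases hA01 ω with h | h <;> simp [h]
    rw [hA0]
    filter_upwards [condExp_sub (integrable_const (1 : ℝ)) hA1 m, hp] with ω hsub hpω
    rw [hsub, Pi.sub_apply, condExp_const hm, hpω]
    ring
  · filter_upwards [hp] with ω hpω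
    rw [hpω]
    ring

variable {T Y e r g : Ω → ℝ}

theorem condExp_mul_sub_eq (hT : AEStronglyMeasurable T μ) (hT1 : ∀ᵐ ω ∂μ, ‖T ω‖ ≤ 1)
    (hY : Integrable Y μ) (hg : AEStronglyMeasurable[m] g μ) (hgi : Integrable g μ)
    (he : μ[T|m] =ᵐ[μ] e) (hYT : μ[fun ω => Y ω * T ω|m] =ᵐ[μ] fun ω => r ω * e ω) :
    μ[fun ω => T ω * (Y ω - g ω)|m] =ᵐ[μ] fun ω => (r ω - g ω) * e ω := by
  have hTi : Integrable T μ := .of_bound hT 1 hT1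
  have hYTi : Integrable (fun ω => Y ω * T ω) μ := hY.mul_bdd hT hT1
  have hgT : Integrable (g * T) μ := hgi.mul_bdd hT hT1
  have hsplit : (fun ω => T ω * (Y ω - g ω)) = (fun ω => Y ω * T ω) - g * T := by
    ext ω
    simp only [Pi.sub_apply, Pi.mul_apply]
    ring
  rw [hsplit]
  filter_upwards [condExp_sub hYTi hgT m, condExp_mul_of_aestronglyMeasurable_left hg hgT hTi, hYT,
    he] with ω hsub hpull hrω heω
  rw [hsub, Pi.sub_apply, hpull, hrω, Pi.mul_apply, heω]
  ring

/-- The paper's `mₐ(Z; π, μ)`, with `T = 1{A=a}`, `g = μ(L,a)` and `q = πₐ(L)`. -/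
noncomputable def drScore (T Y g q : Ω → ℝ) (ω : Ω) : ℝ :=
  T ω * (Y ω - g ω) / q ω + g ω

theorem integral_drScore (hm : m ≤ mΩ) (hT : AEStronglyMeasurable T μ)
    (hT1 : ∀ᵐ ω ∂μ, ‖T ω‖ ≤ 1) (hY : Integrable Y μ) (hg : AEStronglyMeasurable[m] g μ)
    (hgi : Integrable g μ) (he : μ[T|m] =ᵐ[μ] e)
    (hYT : μ[fun ω => Y ω * T ω|m] =ᵐ[μ] fun ω => r ω * e ω) {q : Ω → ℝ} {δ : ℝ} (hδ : 0 < δ)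
    (hq : AEStronglyMeasurable[m] q μ) (hqδ : ∀ᵐ ω ∂μ, δ ≤ q ω) :
    ∫ ω, drScore T Y g q ω ∂μ = ∫ ω, g ω ∂μ + ∫ ω, (r ω - g ω) * e ω / q ω ∂μ := by
  have hX : Integrable (fun ω => T ω * (Y ω - g ω)) μ := (hY.sub hgi).bdd_mul hT hT1
  have hq_inv : ∀ᵐ ω ∂μ, ‖(q ω)⁻¹‖ ≤ δ⁻¹ := by
    filter_upwards [hqδ] with ω hω
    rw [Real.norm_eq_abs, abs_inv, abs_of_pos (hδ.trans_le hω)]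
    exact inv_anti₀ hδ hω
  have hq_inv_meas : AEStronglyMeasurable[m] (fun ω => (q ω)⁻¹) μ := hq.inv₀
  have hqX : Integrable (fun ω => (q ω)⁻¹ * (T ω * (Y ω - g ω))) μ :=
    hX.bdd_mul (hq_inv_meas.mono hm) hq_inv
  calc ∫ ω, drScore T Y g q ω ∂μ
      = ∫ ω, (q ω)⁻¹ * (T ω * (Y ω - g ω)) ∂μ + ∫ ω, g ω ∂μ := by
        rw [← integral_add hqX hgi]
        simp only [drScore, div_eq_inv_mul]
    _ = ∫ ω, (q ω)⁻¹ * (μ[fun ω => T ω * (Y ω - g ω)|m]) ω ∂μ + ∫ ω, g ω ∂μ := by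
        rw [integral_mul_condExp_of_aestronglyMeasurable_left hm hq_inv_meas hqX hX]
    _ = ∫ ω, g ω ∂μ + ∫ ω, (r ω - g ω) * e ω / q ω ∂μ := by
        rw [add_comm]
        congr 1
        refine integral_congr_ae ?_
        filter_upwards [condExp_mul_sub_eq hT hT1 hY hg hgi he hYT] with ω hω
        rw [hω, div_eq_inv_mul]

theorem integral_drScore_eq_of_propensity (hm : m ≤ mΩ) (hT : AEStronglyMeasurable T μ)
    (hT1 : ∀ᵐ ω ∂μ, ‖T ω‖ ≤ 1) (hY : Integrable Y μ) (hg : AEStronglyMeasurable[m] g μ)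
    (hgi : Integrable g μ) (he : μ[T|m] =ᵐ[μ] e)
    (hYT : μ[fun ω => Y ω * T ω|m] =ᵐ[μ] fun ω => r ω * e ω) (hri : Integrable r μ) {δ : ℝ}
    (hδ : 0 < δ) (heδ : ∀ᵐ ω ∂μ, δ ≤ e ω) :
    ∫ ω, drScore T Y g e ω ∂μ = ∫ ω, r ω ∂μ := by
  have hcancel : ∀ᵐ ω ∂μ, (r ω - g ω) * e ω / e ω = r ω - g ω := by
    filter_upwards [heδ] with ω hω
    exact mul_div_cancel_right₀ _ (hδ.trans_le hω).ne'
  rw [integral_drScore hm hT hT1 hY hg hgi he hYT hδ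
    (stronglyMeasurable_condExp.aestronglyMeasurable.congr he) heδ,
    integral_congr_ae hcancel, integral_sub hri hgi]
  ring

theorem integral_drScore_eq_of_regression (hm : m ≤ mΩ) (hT : AEStronglyMeasurable T μ)
    (hT1 : ∀ᵐ ω ∂μ, ‖T ω‖ ≤ 1) (hY : Integrable Y μ) (hr : AEStronglyMeasurable[m] r μ)
    (hri : Integrable r μ) (he : μ[T|m] =ᵐ[μ] e)
    (hYT : μ[fun ω => Y ω * T ω|m] =ᵐ[μ] fun ω => r ω * e ω) {q : Ω → ℝ} {δ : ℝ} (hδ : 0 < δ)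
    (hq : AEStronglyMeasurable[m] q μ) (hqδ : ∀ᵐ ω ∂μ, δ ≤ q ω) :
    ∫ ω, drScore T Y r q ω ∂μ = ∫ ω, r ω ∂μ := by
  simp [integral_drScore hm hT hT1 hY hr hri he hYT hδ hq hqδ]

end CondExp

theorem doubly_robust_unbiasedness_general
    {Ω 𝓛 : Type*} [MeasurableSpace Ω] [MeasurableSpace 𝓛]
    (P : Measure Ω) [IsProbabilityMeasure P]
    (L : Ω → 𝓛) (A Y : Ω → ℝ)
    (hL : Measurable L) (hA : Measurable A)
    (hA01 : ∀ ω, A ω = 0 ∨ A ω = 1)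
    (hYint : Integrable Y P)
    -- π₀(L) is a version of P(A = 1 ∣ σ(L))
    (π₀ : 𝓛 → ℝ)
    (hps : P[(fun ω => if A ω = 1 then (1 : ℝ) else 0) |
        MeasurableSpace.comap L inferInstance] =ᵐ[P] fun ω => π₀ (L ω))
    -- positivity: δ ≤ π₀(L) ≤ 1 − δ a.s. for some δ > 0
    (δ : ℝ) (hδ : 0 < δ) (hpos : ∀ᵐ ω ∂P, δ ≤ π₀ (L ω) ∧ π₀ (L ω) ≤ 1 - δ)
    -- outcome regression: E[Y·1{A=a} ∣ σ(L)] = μ₀(L,a)·π₀ₐ(L) a.s. for a = 0, 1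
    (μ₀ : 𝓛 → ℝ → ℝ) (hμ₀ : Measurable fun p : 𝓛 × ℝ => μ₀ p.1 p.2)
    (hreg : ∀ a ∈ ({0, 1} : Set ℝ),
      P[(fun ω => Y ω * (if A ω = a then (1 : ℝ) else 0)) |
          MeasurableSpace.comap L inferInstance]
        =ᵐ[P] fun ω => μ₀ (L ω) a * (a * π₀ (L ω) + (1 - a) * (1 - π₀ (L ω))))
    -- fix a ∈ {0,1}
    (a : ℝ) (ha : a ∈ ({0, 1} : Set ℝ)) :
    -- (i) correctly specified propensity score, arbitrary outcome model μ̄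
    (∀ μbar : 𝓛 → ℝ → ℝ, (Measurable fun p : 𝓛 × ℝ => μbar p.1 p.2) →
      Integrable (fun ω => μbar (L ω) a) P →
      ∫ ω, ((if A ω = a then (1 : ℝ) else 0) * (Y ω - μbar (L ω) a)
            / (a * π₀ (L ω) + (1 - a) * (1 - π₀ (L ω))) + μbar (L ω) a) ∂P
        = ∫ ω, μ₀ (L ω) a ∂P)
    ∧
    -- (ii) correctly specified outcome regression, arbitrary propensity model π̄
    (∀ πbar : 𝓛 → ℝ, Measurable πbar → (∀ l, 0 ≤ πbar l ∧ πbar l ≤ 1) →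
      ∀ δ' : ℝ, 0 < δ' →
      (∀ᵐ ω ∂P, δ' ≤ a * πbar (L ω) + (1 - a) * (1 - πbar (L ω))) →
      Integrable (fun ω => μ₀ (L ω) a) P →
      ∫ ω, ((if A ω = a then (1 : ℝ) else 0) * (Y ω - μ₀ (L ω) a)
            / (a * πbar (L ω) + (1 - a) * (1 - πbar (L ω))) + μ₀ (L ω) a) ∂P
        = ∫ ω, μ₀ (L ω) a ∂P) := by
  have hm : MeasurableSpace.comap L inferInstance ≤ ‹MeasurableSpace Ω› := hL.comap_le
  have hT : Measurable fun ω => if A ω = a then (1 : ℝ) else 0 :=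
    Measurable.ite (hA (measurableSet_singleton a)) measurable_const measurable_const
  have hT1 : ∀ᵐ ω ∂P, ‖if A ω = a then (1 : ℝ) else 0‖ ≤ 1 :=
    ae_of_all _ fun ω => by split_ifs <;> simp
  have he := condExp_indicator_binary hm hA01 hA hps ha
  have hπ₀a_ge : ∀ᵐ ω ∂P, δ ≤ a * π₀ (L ω) + (1 - a) * (1 - π₀ (L ω)) := by
    filter_upwards [hpos] with ω hω
    rcases ha with rfl | rfl <;> linarith [hω.1, hω.2]
  have hμL : ∀ μ : 𝓛 → ℝ → ℝ, (Measurable fun p : 𝓛 × ℝ => μ p.1 p.2) →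
      StronglyMeasurable[MeasurableSpace.comap L inferInstance] fun ω => μ (L ω) a :=
    fun μ hμ => ((hμ.comp (measurable_id.prodMk measurable_const)).comp
      (comap_measurable L)).stronglyMeasurable
  refine ⟨fun μbar hμbar hμbar_int => ?_, fun πbar hπbar _ δ' hδ' hπbar_ge hμ₀_int => ?_⟩
  · have hμ₀_int : Integrable (fun ω => μ₀ (L ω) a) P :=
      integrable_of_integrable_mul_of_le hδ ((hμL μ₀ hμ₀).mono hm).aestronglyMeasurable
        (integrable_condExp.congr (hreg a ha)) hπ₀a_ge
    exact integral_drScore_eq_of_propensity hm hT.aestronglyMeasurable hT1 hYint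
      (hμL μbar hμbar).aestronglyMeasurable hμbar_int he (hreg a ha) hμ₀_int hδ hπ₀a_ge
  · have hπbar_a : Measurable[MeasurableSpace.comap L inferInstance]
        fun ω => a * πbar (L ω) + (1 - a) * (1 - πbar (L ω)) :=
      ((hπbar.comp (comap_measurable L)).const_mul a).add
        ((measurable_const.sub (hπbar.comp (comap_measurable L))).const_mul (1 - a))
    exact integral_drScore_eq_of_regression hm hT.aestronglyMeasurable hT1 hYint
      (hμL μ₀ hμ₀).aestronglyMeasurable hμ₀_int he (hreg a ha) hδ'
      hπbar_a.aestronglyMeasurable hπbar_ge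

/-- Double robustness as an unbiased estimating function: with
`mₐ(Z; π, μ) = 1{A=a}·(Y − μ(L,a))/πₐ(L) + μ(L,a)` and `πₐ(L) = a·π(L) + (1−a)(1−π(L))`,
(i) `E[mₐ(Z; π₀, μ̄)] = E[μ₀(L,a)]` for any outcome model `μ̄`, and
(ii) `E[mₐ(Z; π̄, μ₀)] = E[μ₀(L,a)]` for any propensity model `π̄` bounded away from zero. -/
theorem doubly_robust_unbiasedness
    {Ω 𝓛 : Type*} [MeasurableSpace Ω] [MeasurableSpace 𝓛]
    (P : Measure Ω) [IsProbabilityMeasure P]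
    (L : Ω → 𝓛) (A Y : Ω → ℝ)
    (hL : Measurable L) (hA : Measurable A) (hY : Measurable Y)
    (hA01 : ∀ ω, A ω = 0 ∨ A ω = 1)
    (hYint : Integrable Y P)
    -- π₀(L) is a version of P(A = 1 ∣ σ(L))
    (π₀ : 𝓛 → ℝ) (hπ₀ : Measurable π₀) (hπ₀01 : ∀ l, 0 ≤ π₀ l ∧ π₀ l ≤ 1)
    (hps : P[(fun ω => if A ω = 1 then (1 : ℝ) else 0) |
        MeasurableSpace.comap L inferInstance] =ᵐ[P] fun ω => π₀ (L ω))
    -- positivity: δ ≤ π₀(L) ≤ 1 − δ a.s. for some δ > 0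
    (δ : ℝ) (hδ : 0 < δ) (hpos : ∀ᵐ ω ∂P, δ ≤ π₀ (L ω) ∧ π₀ (L ω) ≤ 1 - δ)
    -- outcome regression: E[Y·1{A=a} ∣ σ(L)] = μ₀(L,a)·π₀ₐ(L) a.s. for a = 0, 1
    (μ₀ : 𝓛 → ℝ → ℝ) (hμ₀ : Measurable fun p : 𝓛 × ℝ => μ₀ p.1 p.2)
    (hreg : ∀ a ∈ ({0, 1} : Set ℝ),
      P[(fun ω => Y ω * (if A ω = a then (1 : ℝ) else 0)) |
          MeasurableSpace.comap L inferInstance]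
        =ᵐ[P] fun ω => μ₀ (L ω) a * (a * π₀ (L ω) + (1 - a) * (1 - π₀ (L ω))))
    -- fix a ∈ {0,1}
    (a : ℝ) (ha : a ∈ ({0, 1} : Set ℝ)) :
    -- (i) correctly specified propensity score, arbitrary outcome model μ̄
    (∀ μbar : 𝓛 → ℝ → ℝ, (Measurable fun p : 𝓛 × ℝ => μbar p.1 p.2) →
      Integrable (fun ω => μbar (L ω) a) P →
      ∫ ω, ((if A ω = a then (1 : ℝ) else 0) * (Y ω - μbar (L ω) a)
            / (a * π₀ (L ω) + (1 - a) * (1 - π₀ (L ω))) + μbar (L ω) a) ∂P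
        = ∫ ω, μ₀ (L ω) a ∂P)
    ∧
    -- (ii) correctly specified outcome regression, arbitrary propensity model π̄
    (∀ πbar : 𝓛 → ℝ, Measurable πbar → (∀ l, 0 ≤ πbar l ∧ πbar l ≤ 1) →
      ∀ δ' : ℝ, 0 < δ' →
      (∀ᵐ ω ∂P, δ' ≤ a * πbar (L ω) + (1 - a) * (1 - πbar (L ω))) →
      Integrable (fun ω => μ₀ (L ω) a) P →
      ∫ ω, ((if A ω = a then (1 : ℝ) else 0) * (Y ω - μ₀ (L ω) a)
            / (a * πbar (L ω) + (1 - a) * (1 - πbar (L ω))) + μ₀ (L ω) a) ∂P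
        = ∫ ω, μ₀ (L ω) a ∂P) :=
  doubly_robust_unbiasedness_general P L A Y hL hA hA01 hYint π₀ hps δ hδ hpos μ₀ hμ₀ hreg a ha
end

section
/- Suppose Y is integrable and positivity holds (δ ≤ π₀(L) ≤ 1−δ almost surely for some δ > 0). Fix a ∈ {0,1}, and let π̂ : 𝓛 → [0,1] be measurable with π̂ₐ(L) ≥ δ' > 0 almost surely, and μ̂ : 𝓛 × {0,1} → ℝ be measurable with μ₀(L,a) and μ̂(L,a) square-integrable. Then the bias of the doubly robust functional admits the exact second-order product representation: E[ mₐ(Z; π̂, μ̂) ] − E[ μ₀(L,a) ] = E[ ((π₀ₐ(L) − π̂ₐ(L)) / π̂ₐ(L)) · (μ₀(L,a) − μ̂(L,a)) ]. -/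
/-!
Put `W = 1{A=a}·(Y − μ̂(L,a))`. The pull-out property gives
`E[W ∣ L] = π₀ₐ(L)·(μ₀(L,a) − μ̂(L,a))`, and since `1/π̂ₐ(L)` is `σ(L)`-measurable and bounded by
`1/δ'`, `E[W/π̂ₐ(L)] = E[π₀ₐ(L)·(μ₀(L,a) − μ̂(L,a))/π̂ₐ(L)]`. Subtracting
`E[μ₀(L,a) − μ̂(L,a)]` from both sides yields the product form.
-/

open MeasureTheory ProbabilityTheory Filter

section

variable {Ω : Type*} {m m₀ : MeasurableSpace Ω} {P : Measure Ω}

theorem Real.norm_inv_le_inv_of_le {δ x : ℝ} (hδ : 0 < δ) (h : δ ≤ x) : ‖x⁻¹‖ ≤ δ⁻¹ := by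
  rw [norm_inv, Real.norm_of_nonneg (hδ.le.trans h)]
  exact inv_anti₀ hδ h

theorem MeasureTheory.Integrable.div_of_ge {W D : Ω → ℝ} {δ : ℝ} (hW : Integrable W P)
    (hD : AEStronglyMeasurable D P) (hδ : 0 < δ) (hD_ge : ∀ᵐ ω ∂P, δ ≤ D ω) :
    Integrable (fun ω => W ω / D ω) P := by
  simp_rw [div_eq_inv_mul]
  exact hW.bdd_mul hD.aemeasurable.inv.aestronglyMeasurable
    (hD_ge.mono fun ω h => Real.norm_inv_le_inv_of_le hδ h)

variable [IsFiniteMeasure P]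

theorem integral_mul_condExp_of_bounded (hm : m ≤ m₀) {g f : Ω → ℝ} {C : ℝ}
    (hg : StronglyMeasurable[m] g) (hg_bound : ∀ᵐ ω ∂P, ‖g ω‖ ≤ C) (hf : Integrable f P) :
    ∫ ω, g ω * f ω ∂P = ∫ ω, g ω * (P[f|m]) ω ∂P := by
  have hgf : Integrable (g * f) P := hf.bdd_mul (hg.mono hm).aestronglyMeasurable hg_bound
  calc ∫ ω, g ω * f ω ∂P = ∫ ω, (P[g * f|m]) ω ∂P := (integral_condExp hm).symm
    _ = ∫ ω, g ω * (P[f|m]) ω ∂P :=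
      integral_congr_ae (condExp_mul_of_stronglyMeasurable_left hg hgf hf)

theorem integral_div_condExp (hm : m ≤ m₀) {W D : Ω → ℝ} {δ : ℝ} (hδ : 0 < δ)
    (hD : Measurable[m] D) (hD_ge : ∀ᵐ ω ∂P, δ ≤ D ω) (hW : Integrable W P) :
    ∫ ω, W ω / D ω ∂P = ∫ ω, (P[W|m]) ω / D ω ∂P := by
  simp_rw [div_eq_inv_mul]
  exact integral_mul_condExp_of_bounded hm hD.inv.stronglyMeasurable
    (hD_ge.mono fun ω h => Real.norm_inv_le_inv_of_le hδ h) hW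

theorem condExp_mul_sub_of_bounded {I Y h : Ω → ℝ}
    (hI : AEStronglyMeasurable I P) (hI_bound : ∀ᵐ ω ∂P, ‖I ω‖ ≤ 1) (hY : Integrable Y P)
    (hh : StronglyMeasurable[m] h) (hh_int : Integrable h P) :
    P[fun ω => I ω * (Y ω - h ω)|m]
      =ᵐ[P] P[fun ω => Y ω * I ω|m] - h * P[I|m] := by
  have hI_int : Integrable I P := (integrable_const (1 : ℝ)).mono' hI hI_bound
  have hYI : Integrable (fun ω => Y ω * I ω) P := hY.mul_bdd hI hI_bound
  have hhI : Integrable (h * I) P := hh_int.mul_bdd hI hI_bound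
  have hsplit : (fun ω => I ω * (Y ω - h ω)) = (fun ω => Y ω * I ω) - h * I := by
    funext ω; simp only [Pi.sub_apply, Pi.mul_apply]; ring
  rw [hsplit]
  exact (condExp_sub hYI hhI m).trans
    (EventuallyEq.rfl.sub (condExp_mul_of_stronglyMeasurable_left hh hhI hI_int))

theorem integral_doublyRobust_sub_eq (hm : m ≤ m₀) {I Y D p μ μh : Ω → ℝ} {δ : ℝ} (hδ : 0 < δ)
    (hD : Measurable[m] D) (hD_ge : ∀ᵐ ω ∂P, δ ≤ D ω)
    (hI : AEStronglyMeasurable I P) (hI_bound : ∀ᵐ ω ∂P, ‖I ω‖ ≤ 1) (hY : Integrable Y P)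
    (hμh : Measurable[m] μh) (hμh_int : Integrable μh P) (hμ_int : Integrable μ P)
    (hIp : P[I|m] =ᵐ[P] p) (hYI : P[fun ω => Y ω * I ω|m] =ᵐ[P] fun ω => μ ω * p ω) :
    (∫ ω, (I ω * (Y ω - μh ω) / D ω + μh ω) ∂P) - ∫ ω, μ ω ∂P
      = ∫ ω, ((p ω - D ω) / D ω) * (μ ω - μh ω) ∂P := by
  set W := fun ω => I ω * (Y ω - μh ω)
  have hW_int : Integrable W P := (hY.sub hμh_int).bdd_mul hI hI_bound
  have hW_cond : P[W|m] =ᵐ[P] fun ω => p ω * (μ ω - μh ω) := by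
    filter_upwards [condExp_mul_sub_of_bounded hI hI_bound hY hμh.stronglyMeasurable hμh_int,
      hIp, hYI] with ω hW_ω hIp_ω hYI_ω
    rw [hW_ω, Pi.sub_apply, Pi.mul_apply, hIp_ω, hYI_ω]
    ring
  have hD' : AEStronglyMeasurable D P := (hD.mono hm le_rfl).aestronglyMeasurable
  have hWD := hW_int.div_of_ge hD' hδ hD_ge
  have hcondWD := (integrable_condExp (m := m) (f := W)).div_of_ge hD' hδ hD_ge
  calc (∫ ω, (W ω / D ω + μh ω) ∂P) - ∫ ω, μ ω ∂P
      = (∫ ω, W ω / D ω ∂P) + (∫ ω, μh ω ∂P) - ∫ ω, μ ω ∂P := by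
        rw [integral_add hWD hμh_int]
    _ = (∫ ω, (P[W|m]) ω / D ω ∂P) - ∫ ω, (μ ω - μh ω) ∂P := by
        rw [integral_div_condExp hm hδ hD hD_ge hW_int, integral_sub hμ_int hμh_int]
        ring
    _ = ∫ ω, ((P[W|m]) ω / D ω - (μ ω - μh ω)) ∂P :=
        (integral_sub hcondWD (hμ_int.sub hμh_int)).symm
    _ = ∫ ω, ((p ω - D ω) / D ω) * (μ ω - μh ω) ∂P := by
        refine integral_congr_ae ?_
        filter_upwards [hW_cond, hD_ge] with ω hW_ω hD_ω
        have : D ω ≠ 0 := (hδ.trans_le hD_ω).ne'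
        rw [hW_ω]
        field_simp

theorem condExp_indicator_eq_of_binary (hm : m ≤ m₀) {A q : Ω → ℝ} (hA : Measurable A)
    (hA01 : ∀ ω, A ω = 0 ∨ A ω = 1)
    (hq : P[fun ω => if A ω = 1 then (1 : ℝ) else 0|m] =ᵐ[P] q) {a : ℝ} (ha : a = 0 ∨ a = 1) :
    P[fun ω => if A ω = a then (1 : ℝ) else 0|m] =ᵐ[P] fun ω => a * q ω + (1 - a) * (1 - q ω) := by
  rcases ha with rfl | rfl
  · have hcompl : (fun ω => if A ω = 0 then (1 : ℝ) else 0)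
        = (fun _ => (1 : ℝ)) - fun ω => if A ω = 1 then (1 : ℝ) else 0 := by
      funext ω
      rcases hA01 ω with h | h <;> simp [h]
    have hA1_int : Integrable (fun ω => if A ω = 1 then (1 : ℝ) else 0) P :=
      (integrable_const (1 : ℝ)).mono'
        (measurable_const.ite (hA (measurableSet_singleton 1))
          measurable_const).aestronglyMeasurable
        (ae_of_all _ fun ω => by split_ifs <;> simp)
    rw [hcompl]
    filter_upwards [condExp_sub (integrable_const (1 : ℝ)) hA1_int m, hq] with ω h hq_ω
    rw [h, Pi.sub_apply, condExp_const hm, hq_ω]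
    ring
  · exact hq.trans (ae_of_all _ fun ω => by ring)

end

theorem doubly_robust_second_order_bias_general
    {Ω 𝓛 : Type*} [MeasurableSpace Ω] [MeasurableSpace 𝓛]
    (P : Measure Ω) [IsProbabilityMeasure P]
    (L : Ω → 𝓛) (A Y : Ω → ℝ)
    (hL : Measurable L) (hA : Measurable A)
    (hA01 : ∀ ω, A ω = 0 ∨ A ω = 1)
    (hYint : Integrable Y P)
    -- π₀(L) is a version of P(A = 1 ∣ σ(L))
    (π₀ : 𝓛 → ℝ)
    (hps : P[(fun ω => if A ω = 1 then (1 : ℝ) else 0) |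
        MeasurableSpace.comap L inferInstance] =ᵐ[P] fun ω => π₀ (L ω))
    -- outcome regression: E[Y·1{A=a} ∣ σ(L)] = μ₀(L,a)·π₀ₐ(L) a.s. for a = 0, 1
    (μ₀ : 𝓛 → ℝ → ℝ)
    (hreg : ∀ a ∈ ({0, 1} : Set ℝ),
      P[(fun ω => Y ω * (if A ω = a then (1 : ℝ) else 0)) |
          MeasurableSpace.comap L inferInstance]
        =ᵐ[P] fun ω => μ₀ (L ω) a * (a * π₀ (L ω) + (1 - a) * (1 - π₀ (L ω))))
    -- fix a ∈ {0,1}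
    (a : ℝ) (ha : a ∈ ({0, 1} : Set ℝ))
    -- estimated nuisance functions
    (πhat : 𝓛 → ℝ) (hπhat : Measurable πhat)
    (δ' : ℝ) (hδ' : 0 < δ')
    (hπhatpos : ∀ᵐ ω ∂P, δ' ≤ a * πhat (L ω) + (1 - a) * (1 - πhat (L ω)))
    (μhat : 𝓛 → ℝ → ℝ) (hμhat : Measurable fun p : 𝓛 × ℝ => μhat p.1 p.2)
    (hμ₀L2 : MemLp (fun ω => μ₀ (L ω) a) 2 P)
    (hμhatL2 : MemLp (fun ω => μhat (L ω) a) 2 P) :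
    (∫ ω, ((if A ω = a then (1 : ℝ) else 0) * (Y ω - μhat (L ω) a)
          / (a * πhat (L ω) + (1 - a) * (1 - πhat (L ω))) + μhat (L ω) a) ∂P)
      - ∫ ω, μ₀ (L ω) a ∂P
    = ∫ ω, (((a * π₀ (L ω) + (1 - a) * (1 - π₀ (L ω)))
            - (a * πhat (L ω) + (1 - a) * (1 - πhat (L ω))))
          / (a * πhat (L ω) + (1 - a) * (1 - πhat (L ω))))
        * (μ₀ (L ω) a - μhat (L ω) a) ∂P := by
  have ha01 : a = 0 ∨ a = 1 := by simpa using ha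
  have hLm : Measurable[MeasurableSpace.comap L inferInstance] L := comap_measurable L
  have hπhat_a : Measurable fun l => a * πhat l + (1 - a) * (1 - πhat l) := by fun_prop
  have hInd : Measurable fun ω => if A ω = a then (1 : ℝ) else 0 :=
    measurable_const.ite (hA (measurableSet_singleton a)) measurable_const
  exact integral_doublyRobust_sub_eq hL.comap_le hδ' (hπhat_a.comp hLm) hπhatpos
    hInd.aestronglyMeasurable (ae_of_all _ fun ω => by split_ifs <;> simp) hYint
    (hμhat.comp (hLm.prodMk measurable_const)) (hμhatL2.integrable one_le_two)
    (hμ₀L2.integrable one_le_two)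
    (condExp_indicator_eq_of_binary hL.comap_le hA hA01 hps ha01) (hreg a ha)

/-- Exact second-order product representation of the bias of the doubly
robust functional:
`E[mₐ(Z; π̂, μ̂)] − E[μ₀(L,a)] = E[((π₀ₐ(L) − π̂ₐ(L))/π̂ₐ(L))·(μ₀(L,a) − μ̂(L,a))]`. -/
theorem doubly_robust_second_order_bias
    {Ω 𝓛 : Type*} [MeasurableSpace Ω] [MeasurableSpace 𝓛]
    (P : Measure Ω) [IsProbabilityMeasure P]
    (L : Ω → 𝓛) (A Y : Ω → ℝ)
    (hL : Measurable L) (hA : Measurable A) (hY : Measurable Y)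
    (hA01 : ∀ ω, A ω = 0 ∨ A ω = 1)
    (hYint : Integrable Y P)
    -- π₀(L) is a version of P(A = 1 ∣ σ(L))
    (π₀ : 𝓛 → ℝ) (hπ₀ : Measurable π₀) (hπ₀01 : ∀ l, 0 ≤ π₀ l ∧ π₀ l ≤ 1)
    (hps : P[(fun ω => if A ω = 1 then (1 : ℝ) else 0) |
        MeasurableSpace.comap L inferInstance] =ᵐ[P] fun ω => π₀ (L ω))
    -- positivity: δ ≤ π₀(L) ≤ 1 − δ a.s. for some δ > 0
    (δ : ℝ) (hδ : 0 < δ) (hpos : ∀ᵐ ω ∂P, δ ≤ π₀ (L ω) ∧ π₀ (L ω) ≤ 1 - δ)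
    -- outcome regression: E[Y·1{A=a} ∣ σ(L)] = μ₀(L,a)·π₀ₐ(L) a.s. for a = 0, 1
    (μ₀ : 𝓛 → ℝ → ℝ) (hμ₀ : Measurable fun p : 𝓛 × ℝ => μ₀ p.1 p.2)
    (hreg : ∀ a ∈ ({0, 1} : Set ℝ),
      P[(fun ω => Y ω * (if A ω = a then (1 : ℝ) else 0)) |
          MeasurableSpace.comap L inferInstance]
        =ᵐ[P] fun ω => μ₀ (L ω) a * (a * π₀ (L ω) + (1 - a) * (1 - π₀ (L ω))))
    -- fix a ∈ {0,1}
    (a : ℝ) (ha : a ∈ ({0, 1} : Set ℝ))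
    -- estimated nuisance functions
    (πhat : 𝓛 → ℝ) (hπhat : Measurable πhat) (hπhat01 : ∀ l, 0 ≤ πhat l ∧ πhat l ≤ 1)
    (δ' : ℝ) (hδ' : 0 < δ')
    (hπhatpos : ∀ᵐ ω ∂P, δ' ≤ a * πhat (L ω) + (1 - a) * (1 - πhat (L ω)))
    (μhat : 𝓛 → ℝ → ℝ) (hμhat : Measurable fun p : 𝓛 × ℝ => μhat p.1 p.2)
    (hμ₀L2 : MemLp (fun ω => μ₀ (L ω) a) 2 P)
    (hμhatL2 : MemLp (fun ω => μhat (L ω) a) 2 P) :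
    (∫ ω, ((if A ω = a then (1 : ℝ) else 0) * (Y ω - μhat (L ω) a)
          / (a * πhat (L ω) + (1 - a) * (1 - πhat (L ω))) + μhat (L ω) a) ∂P)
      - ∫ ω, μ₀ (L ω) a ∂P
    = ∫ ω, (((a * π₀ (L ω) + (1 - a) * (1 - π₀ (L ω)))
            - (a * πhat (L ω) + (1 - a) * (1 - πhat (L ω))))
          / (a * πhat (L ω) + (1 - a) * (1 - πhat (L ω))))
        * (μ₀ (L ω) a - μhat (L ω) a) ∂P :=
  doubly_robust_second_order_bias_general P L A Y hL hA hA01 hYint π₀ hps μ₀ hreg a ha πhat hπhat δ'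
    hδ' hπhatpos μhat hμhat hμ₀L2 hμhatL2
end

section
/- Suppose Y is integrable and positivity holds (δ ≤ π₀(L) ≤ 1−δ almost surely for some δ > 0). Fix a ∈ {0,1}, and let π̂ : 𝓛 → [0,1] be measurable with π̂ₐ(L) ≥ δ' > 0 almost surely, and μ̂ : 𝓛 × {0,1} → ℝ be measurable with μ₀(L,a) and μ̂(L,a) square-integrable. Then the bias of the doubly robust functional is bounded by the product of root-mean-square nuisance errors: |E[ mₐ(Z; π̂, μ̂) ] − E[ μ₀(L,a) ]| ≤ (1/δ') · ‖π̂ₐ(L) − π₀ₐ(L)‖_{L²(P)} · ‖μ̂(L,a) − μ₀(L,a)‖_{L²(P)}. -/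
/-!
Conditioning on `L`, the inverse-weighted residual `1{A=a}(Y − μ̂)/π̂ₐ` has the same mean as
`(μ₀ − μ̂)·π₀ₐ/π̂ₐ`, so the bias equals `E[(π̂ₐ − π₀ₐ)(μ̂ − μ₀)/π̂ₐ]`: a product of the two
nuisance errors. Bounding `1/π̂ₐ` by `1/δ'` and applying Cauchy–Schwarz gives the claim.
-/

open MeasureTheory ProbabilityTheory

open scoped ENNReal

section CauchySchwarz

variable {Ω : Type*} [MeasurableSpace Ω] {P : Measure Ω}

lemma integral_abs_mul_abs_le_sqrt_mul_sqrt {u v : Ω → ℝ} (hu : MemLp u 2 P) (hv : MemLp v 2 P) :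
    ∫ ω, |u ω| * |v ω| ∂P ≤ √(∫ ω, u ω ^ 2 ∂P) * √(∫ ω, v ω ^ 2 ∂P) := by
  have hsq : ∀ x : ℝ, |x| ^ (2 : ℝ) = x ^ 2 := fun x => by
    rw [Real.rpow_two, sq_abs]
  have hu' : MemLp (fun ω => |u ω|) (ENNReal.ofReal 2) P := by
    simpa [Real.norm_eq_abs] using hu.norm
  have hv' : MemLp (fun ω => |v ω|) (ENNReal.ofReal 2) P := by
    simpa [Real.norm_eq_abs] using hv.norm
  have := integral_mul_le_Lp_mul_Lq_of_nonneg Real.HolderConjugate.two_two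
    (.of_forall fun ω => abs_nonneg (u ω)) (.of_forall fun ω => abs_nonneg (v ω)) hu' hv'
  simpa only [hsq, Real.sqrt_eq_rpow, one_div] using this

lemma abs_integral_mul_mul_le {u v w : Ω → ℝ} {C : ℝ} (hu : MemLp u 2 P) (hv : MemLp v 2 P)
    (hw : AEStronglyMeasurable w P) (hwC : ∀ᵐ ω ∂P, |w ω| ≤ C) (hC : 0 ≤ C) :
    |∫ ω, u ω * v ω * w ω ∂P| ≤ C * √(∫ ω, u ω ^ 2 ∂P) * √(∫ ω, v ω ^ 2 ∂P) := by
  have huv : Integrable (fun ω => |u ω| * |v ω|) P := hu.norm.integrable_mul hv.norm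
  calc |∫ ω, u ω * v ω * w ω ∂P|
      ≤ ∫ ω, |u ω * v ω * w ω| ∂P := abs_integral_le_integral_abs
    _ ≤ ∫ ω, C * (|u ω| * |v ω|) ∂P := by
        refine integral_mono_ae ?_ (huv.const_mul C) ?_
        · exact (huv.mul_bdd hw hwC).abs.congr (.of_forall fun ω => by simp [abs_mul])
        · filter_upwards [hwC] with ω hω
          rw [abs_mul, abs_mul, mul_comm C]
          exact mul_le_mul_of_nonneg_left hω (by positivity)
    _ = C * ∫ ω, |u ω| * |v ω| ∂P := integral_const_mul C _
    _ ≤ C * √(∫ ω, u ω ^ 2 ∂P) * √(∫ ω, v ω ^ 2 ∂P) := by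
        rw [mul_assoc]
        exact mul_le_mul_of_nonneg_left (integral_abs_mul_abs_le_sqrt_mul_sqrt hu hv) hC

end CauchySchwarz

section PullOut

variable {Ω : Type*} {m m₀ : MeasurableSpace Ω} {P : Measure Ω} {h f g : Ω → ℝ}

lemma integral_mul_eq_of_condExp_ae_eq (hm : m ≤ m₀) [SigmaFinite (P.trim hm)]
    (hh : StronglyMeasurable[m] h) (hf : Integrable f P) (hhf : Integrable (fun ω => h ω * f ω) P)
    (hg : P[f | m] =ᵐ[P] g) :
    ∫ ω, h ω * f ω ∂P = ∫ ω, h ω * g ω ∂P := by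
  rw [← integral_condExp hm]
  refine integral_congr_ae ?_
  filter_upwards [condExp_mul_of_stronglyMeasurable_left hh hhf hf, hg] with ω hω hgω
  exact hω.trans (congrArg (h ω * ·) hgω)

lemma integrable_mul_of_condExp_ae_eq (hh : StronglyMeasurable[m] h) (hf : Integrable f P)
    (hhf : Integrable (fun ω => h ω * f ω) P) (hg : P[f | m] =ᵐ[P] g) :
    Integrable (fun ω => h ω * g ω) P := by
  refine (integrable_condExp (m := m) (f := h * f)).congr ?_
  filter_upwards [condExp_mul_of_stronglyMeasurable_left hh hhf hf, hg] with ω hω hgω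
  exact hω.trans (congrArg (h ω * ·) hgω)

end PullOut

section MixedBias

variable {Ω : Type*} {m m₀ : MeasurableSpace Ω} {P : Measure Ω} [IsFiniteMeasure P]

theorem integral_weighted_residual_add_sub_eq (hm : m ≤ m₀) {I Y w μhat μ₀ π₀ : Ω → ℝ}
    (hI : MemLp I ∞ P) (hYI : Integrable (fun ω => Y ω * I ω) P)
    (hw : StronglyMeasurable[m] w) (hw_bdd : MemLp w ∞ P)
    (hμhat : StronglyMeasurable[m] μhat) (hμhat_int : Integrable μhat P) (hμ₀ : Integrable μ₀ P)
    (hπ : P[I | m] =ᵐ[P] π₀) (hreg : P[fun ω => Y ω * I ω | m] =ᵐ[P] fun ω => μ₀ ω * π₀ ω) :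
    ∫ ω, (w ω * I ω * (Y ω - μhat ω) + μhat ω) ∂P - ∫ ω, μ₀ ω ∂P
      = ∫ ω, (μhat ω - μ₀ ω) * (1 - w ω * π₀ ω) ∂P := by
  have hwμhat : StronglyMeasurable[m] fun ω => w ω * μhat ω := hw.mul hμhat
  have hI_int : Integrable I P := hI.integrable le_top
  have hwYI : Integrable (fun ω => w ω * (Y ω * I ω)) P := hYI.mul_of_top_right hw_bdd
  have hwμhatI : Integrable (fun ω => w ω * μhat ω * I ω) P :=
    (hμhat_int.mul_of_top_right hw_bdd).mul_of_top_left hI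
  have hwμπ : Integrable (fun ω => w ω * (μ₀ ω * π₀ ω)) P :=
    integrable_mul_of_condExp_ae_eq hw hYI hwYI hreg
  have hwμhatπ : Integrable (fun ω => w ω * μhat ω * π₀ ω) P :=
    integrable_mul_of_condExp_ae_eq hwμhat hI_int hwμhatI hπ
  calc ∫ ω, (w ω * I ω * (Y ω - μhat ω) + μhat ω) ∂P - ∫ ω, μ₀ ω ∂P
      = ∫ ω, w ω * (Y ω * I ω) ∂P - ∫ ω, w ω * μhat ω * I ω ∂P
          + ∫ ω, μhat ω ∂P - ∫ ω, μ₀ ω ∂P := by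
        have hsub : Integrable (fun ω => w ω * (Y ω * I ω) - w ω * μhat ω * I ω) P :=
          hwYI.sub hwμhatI
        rw [← integral_sub hwYI hwμhatI, ← integral_add hsub hμhat_int]
        congr 2; ext ω; ring
    _ = ∫ ω, w ω * (μ₀ ω * π₀ ω) ∂P - ∫ ω, w ω * μhat ω * π₀ ω ∂P
          + ∫ ω, μhat ω ∂P - ∫ ω, μ₀ ω ∂P := by
        rw [integral_mul_eq_of_condExp_ae_eq hm hw hYI hwYI hreg,
          integral_mul_eq_of_condExp_ae_eq hm hwμhat hI_int hwμhatI hπ]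
    _ = ∫ ω, (μhat ω - μ₀ ω) * (1 - w ω * π₀ ω) ∂P := by
        have hsub : Integrable (fun ω => w ω * (μ₀ ω * π₀ ω) - w ω * μhat ω * π₀ ω) P :=
          hwμπ.sub hwμhatπ
        have hadd : Integrable
            (fun ω => w ω * (μ₀ ω * π₀ ω) - w ω * μhat ω * π₀ ω + μhat ω) P :=
          hsub.add hμhat_int
        rw [← integral_sub hwμπ hwμhatπ, ← integral_add hsub hμhat_int, ← integral_sub hadd hμ₀]
        congr 1; ext ω; ring

theorem abs_integral_aipw_sub_integral_le (hm : m ≤ m₀) {I Y p μhat μ₀ π₀ : Ω → ℝ} {δ : ℝ}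
    (hδ : 0 < δ) (hI : MemLp I ∞ P) (hYI : Integrable (fun ω => Y ω * I ω) P)
    (hp : Measurable[m] p) (hpδ : ∀ᵐ ω ∂P, δ ≤ p ω) (hpπ : MemLp (fun ω => p ω - π₀ ω) 2 P)
    (hμhat : StronglyMeasurable[m] μhat) (hμhat₂ : MemLp μhat 2 P) (hμ₀₂ : MemLp μ₀ 2 P)
    (hπ : P[I | m] =ᵐ[P] π₀) (hreg : P[fun ω => Y ω * I ω | m] =ᵐ[P] fun ω => μ₀ ω * π₀ ω) :
    |∫ ω, (I ω * (Y ω - μhat ω) / p ω + μhat ω) ∂P - ∫ ω, μ₀ ω ∂P|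
      ≤ δ⁻¹ * √(∫ ω, (p ω - π₀ ω) ^ 2 ∂P) * √(∫ ω, (μhat ω - μ₀ ω) ^ 2 ∂P) := by
  have hp_inv : ∀ᵐ ω ∂P, |(p ω)⁻¹| ≤ δ⁻¹ := hpδ.mono fun ω h => by
    rw [abs_inv, abs_of_pos (hδ.trans_le h)]
    exact inv_anti₀ hδ h
  have hp_inv_meas : AEStronglyMeasurable (fun ω => (p ω)⁻¹) P :=
    (hp.mono hm le_rfl).inv.aestronglyMeasurable
  have hbias := integral_weighted_residual_add_sub_eq (w := fun ω => (p ω)⁻¹) hm hI hYI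
    hp.inv.stronglyMeasurable (memLp_top_of_bound hp_inv_meas δ⁻¹ hp_inv) hμhat
    (hμhat₂.integrable one_le_two) (hμ₀₂.integrable one_le_two) hπ hreg
  have hdiv : ∫ ω, (I ω * (Y ω - μhat ω) / p ω + μhat ω) ∂P
      = ∫ ω, ((p ω)⁻¹ * I ω * (Y ω - μhat ω) + μhat ω) ∂P := by
    congr 1; ext ω; ring
  have hmixed : ∫ ω, (μhat ω - μ₀ ω) * (1 - (p ω)⁻¹ * π₀ ω) ∂P
      = ∫ ω, (p ω - π₀ ω) * (μhat ω - μ₀ ω) * (p ω)⁻¹ ∂P := by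
    refine integral_congr_ae (hpδ.mono fun ω h => ?_)
    have : p ω ≠ 0 := (hδ.trans_le h).ne'
    field_simp
  rw [hdiv, hbias, hmixed]
  exact abs_integral_mul_mul_le hpπ (hμhat₂.sub hμ₀₂) hp_inv_meas hp_inv (by positivity)

end MixedBias

section BinaryTreatment

variable {Ω : Type*} {m m₀ : MeasurableSpace Ω} {P : Measure Ω} [IsFiniteMeasure P]

lemma condExp_ite_eq_of_binary (hm : m ≤ m₀) {A π : Ω → ℝ} (hA : Measurable A)
    (hA01 : ∀ ω, A ω = 0 ∨ A ω = 1)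
    (hπ : P[fun ω => if A ω = 1 then (1 : ℝ) else 0 | m] =ᵐ[P] π) {a : ℝ} (ha : a = 0 ∨ a = 1) :
    P[fun ω => if A ω = a then (1 : ℝ) else 0 | m]
      =ᵐ[P] fun ω => a * π ω + (1 - a) * (1 - π ω) := by
  rcases ha with rfl | rfl
  · have hI₁ : Integrable (fun ω => if A ω = 1 then (1 : ℝ) else 0) P :=
      (integrable_const (1 : ℝ)).mono'
        (Measurable.ite (hA (measurableSet_singleton 1)) measurable_const
          measurable_const).aestronglyMeasurable
        (.of_forall fun ω => by split_ifs <;> simp)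
    have hI₀ : (fun ω => if A ω = 0 then (1 : ℝ) else 0)
        = fun ω => 1 - if A ω = 1 then (1 : ℝ) else 0 := by
      ext ω; rcases hA01 ω with h | h <;> simp [h]
    rw [hI₀]
    filter_upwards [condExp_sub (m := m) (integrable_const (1 : ℝ)) hI₁, hπ] with ω hω hπω
    refine hω.trans ?_
    rw [Pi.sub_apply, condExp_const hm, hπω]
    ring
  · simpa using hπ

lemma abs_mul_add_one_sub_mul_one_sub_le_one {a p : ℝ} (ha : a = 0 ∨ a = 1)
    (hp : 0 ≤ p ∧ p ≤ 1) : |a * p + (1 - a) * (1 - p)| ≤ 1 := by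
  rcases ha with rfl | rfl <;> rw [abs_le] <;> constructor <;> linarith [hp.1, hp.2]

end BinaryTreatment

theorem doubly_robust_bias_bound_general
    {Ω 𝓛 : Type*} [MeasurableSpace Ω] [MeasurableSpace 𝓛]
    (P : Measure Ω) [IsProbabilityMeasure P]
    (L : Ω → 𝓛) (A Y : Ω → ℝ)
    (hL : Measurable L) (hA : Measurable A)
    (hA01 : ∀ ω, A ω = 0 ∨ A ω = 1)
    (hYint : Integrable Y P)
    -- π₀(L) is a version of P(A = 1 ∣ σ(L))
    (π₀ : 𝓛 → ℝ) (hπ₀ : Measurable π₀) (hπ₀01 : ∀ l, 0 ≤ π₀ l ∧ π₀ l ≤ 1)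
    (hps : P[(fun ω => if A ω = 1 then (1 : ℝ) else 0) |
        MeasurableSpace.comap L inferInstance] =ᵐ[P] fun ω => π₀ (L ω))
    -- outcome regression: E[Y·1{A=a} ∣ σ(L)] = μ₀(L,a)·π₀ₐ(L) a.s. for a = 0, 1
    (μ₀ : 𝓛 → ℝ → ℝ)
    (hreg : ∀ a ∈ ({0, 1} : Set ℝ),
      P[(fun ω => Y ω * (if A ω = a then (1 : ℝ) else 0)) |
          MeasurableSpace.comap L inferInstance]
        =ᵐ[P] fun ω => μ₀ (L ω) a * (a * π₀ (L ω) + (1 - a) * (1 - π₀ (L ω))))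
    -- fix a ∈ {0,1}
    (a : ℝ) (ha : a ∈ ({0, 1} : Set ℝ))
    -- estimated nuisance functions
    (πhat : 𝓛 → ℝ) (hπhat : Measurable πhat) (hπhat01 : ∀ l, 0 ≤ πhat l ∧ πhat l ≤ 1)
    (δ' : ℝ) (hδ' : 0 < δ')
    (hπhatpos : ∀ᵐ ω ∂P, δ' ≤ a * πhat (L ω) + (1 - a) * (1 - πhat (L ω)))
    (μhat : 𝓛 → ℝ → ℝ) (hμhat : Measurable fun p : 𝓛 × ℝ => μhat p.1 p.2)
    (hμ₀L2 : MemLp (fun ω => μ₀ (L ω) a) 2 P)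
    (hμhatL2 : MemLp (fun ω => μhat (L ω) a) 2 P) :
    |(∫ ω, ((if A ω = a then (1 : ℝ) else 0) * (Y ω - μhat (L ω) a)
          / (a * πhat (L ω) + (1 - a) * (1 - πhat (L ω))) + μhat (L ω) a) ∂P)
        - ∫ ω, μ₀ (L ω) a ∂P|
      ≤ (1 / δ')
        * Real.sqrt (∫ ω, ((a * πhat (L ω) + (1 - a) * (1 - πhat (L ω)))
            - (a * π₀ (L ω) + (1 - a) * (1 - π₀ (L ω)))) ^ 2 ∂P)
        * Real.sqrt (∫ ω, (μhat (L ω) a - μ₀ (L ω) a) ^ 2 ∂P) := by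
  have ha' : a = 0 ∨ a = 1 := by simpa using ha
  set phat : Ω → ℝ := fun ω => a * πhat (L ω) + (1 - a) * (1 - πhat (L ω))
  set p0 : Ω → ℝ := fun ω => a * π₀ (L ω) + (1 - a) * (1 - π₀ (L ω))
  set Ia : Ω → ℝ := fun ω => if A ω = a then 1 else 0
  have hphat : Measurable[MeasurableSpace.comap L inferInstance] phat :=
    (by fun_prop : Measurable fun l => a * πhat l + (1 - a) * (1 - πhat l)).comp
      (comap_measurable L)
  have hμhatL : StronglyMeasurable[MeasurableSpace.comap L inferInstance] fun ω => μhat (L ω) a :=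
    ((hμhat.comp (measurable_id.prodMk measurable_const)).comp
      (comap_measurable L)).stronglyMeasurable
  have hIa : MemLp Ia ∞ P :=
    memLp_top_of_bound (Measurable.ite (hA (measurableSet_singleton a)) measurable_const
      measurable_const).aestronglyMeasurable 1
      (.of_forall fun ω => by by_cases h : A ω = a <;> simp [Ia, h])
  have hp0 : Measurable p0 :=
    (by fun_prop : Measurable fun l => a * π₀ l + (1 - a) * (1 - π₀ l)).comp hL
  have hdiff : MemLp (fun ω => phat ω - p0 ω) 2 P :=
    (MemLp.of_bound (hphat.mono hL.comap_le le_rfl).aestronglyMeasurable 1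
        (.of_forall fun ω => abs_mul_add_one_sub_mul_one_sub_le_one ha' (hπhat01 _))).sub
      (MemLp.of_bound hp0.aestronglyMeasurable 1
        (.of_forall fun ω => abs_mul_add_one_sub_mul_one_sub_le_one ha' (hπ₀01 _)))
  rw [one_div]
  exact abs_integral_aipw_sub_integral_le hL.comap_le hδ' hIa (hYint.mul_of_top_left hIa) hphat
    hπhatpos hdiff hμhatL hμhatL2 hμ₀L2
    (condExp_ite_eq_of_binary hL.comap_le hA hA01 hps ha') (hreg a ha)

/-- The bias of the doubly robust functional is bounded by the product of
root-mean-square nuisance errors: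
`|E[mₐ(Z; π̂, μ̂)] − E[μ₀(L,a)]| ≤ (1/δ')·‖π̂ₐ(L) − π₀ₐ(L)‖_{L²}·‖μ̂(L,a) − μ₀(L,a)‖_{L²}`. -/
theorem doubly_robust_bias_bound
    {Ω 𝓛 : Type*} [MeasurableSpace Ω] [MeasurableSpace 𝓛]
    (P : Measure Ω) [IsProbabilityMeasure P]
    (L : Ω → 𝓛) (A Y : Ω → ℝ)
    (hL : Measurable L) (hA : Measurable A) (hY : Measurable Y)
    (hA01 : ∀ ω, A ω = 0 ∨ A ω = 1)
    (hYint : Integrable Y P)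
    -- π₀(L) is a version of P(A = 1 ∣ σ(L))
    (π₀ : 𝓛 → ℝ) (hπ₀ : Measurable π₀) (hπ₀01 : ∀ l, 0 ≤ π₀ l ∧ π₀ l ≤ 1)
    (hps : P[(fun ω => if A ω = 1 then (1 : ℝ) else 0) |
        MeasurableSpace.comap L inferInstance] =ᵐ[P] fun ω => π₀ (L ω))
    -- positivity: δ ≤ π₀(L) ≤ 1 − δ a.s. for some δ > 0
    (δ : ℝ) (hδ : 0 < δ) (hpos : ∀ᵐ ω ∂P, δ ≤ π₀ (L ω) ∧ π₀ (L ω) ≤ 1 - δ)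
    -- outcome regression: E[Y·1{A=a} ∣ σ(L)] = μ₀(L,a)·π₀ₐ(L) a.s. for a = 0, 1
    (μ₀ : 𝓛 → ℝ → ℝ) (hμ₀ : Measurable fun p : 𝓛 × ℝ => μ₀ p.1 p.2)
    (hreg : ∀ a ∈ ({0, 1} : Set ℝ),
      P[(fun ω => Y ω * (if A ω = a then (1 : ℝ) else 0)) |
          MeasurableSpace.comap L inferInstance]
        =ᵐ[P] fun ω => μ₀ (L ω) a * (a * π₀ (L ω) + (1 - a) * (1 - π₀ (L ω))))
    -- fix a ∈ {0,1}
    (a : ℝ) (ha : a ∈ ({0, 1} : Set ℝ))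
    -- estimated nuisance functions
    (πhat : 𝓛 → ℝ) (hπhat : Measurable πhat) (hπhat01 : ∀ l, 0 ≤ πhat l ∧ πhat l ≤ 1)
    (δ' : ℝ) (hδ' : 0 < δ')
    (hπhatpos : ∀ᵐ ω ∂P, δ' ≤ a * πhat (L ω) + (1 - a) * (1 - πhat (L ω)))
    (μhat : 𝓛 → ℝ → ℝ) (hμhat : Measurable fun p : 𝓛 × ℝ => μhat p.1 p.2)
    (hμ₀L2 : MemLp (fun ω => μ₀ (L ω) a) 2 P)
    (hμhatL2 : MemLp (fun ω => μhat (L ω) a) 2 P) :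
    |(∫ ω, ((if A ω = a then (1 : ℝ) else 0) * (Y ω - μhat (L ω) a)
          / (a * πhat (L ω) + (1 - a) * (1 - πhat (L ω))) + μhat (L ω) a) ∂P)
        - ∫ ω, μ₀ (L ω) a ∂P|
      ≤ (1 / δ')
        * Real.sqrt (∫ ω, ((a * πhat (L ω) + (1 - a) * (1 - πhat (L ω)))
            - (a * π₀ (L ω) + (1 - a) * (1 - π₀ (L ω)))) ^ 2 ∂P)
        * Real.sqrt (∫ ω, (μhat (L ω) a - μ₀ (L ω) a) ^ 2 ∂P) :=
  doubly_robust_bias_bound_general P L A Y hL hA hA01 hYint π₀ hπ₀ hπ₀01 hps μ₀ hreg a ha πhat hπhat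
    hπhat01 δ' hδ' hπhatpos μhat hμhat hμ₀L2 hμhatL2
end

section
/- Suppose Y is integrable and positivity holds (δ ≤ π₀(L) ≤ 1−δ almost surely for some δ > 0). For each n let π̂ₙ : Ω × 𝓛 → [δ', 1−δ'] (with δ' > 0) and μ̂ₙ : Ω × 𝓛 × {0,1} → ℝ be jointly measurable estimated nuisance functions with μ₀(L,a) and μ̂ₙ(ω, L, a) square-integrable in L for each ω, and define the random remainder Rₙ(ω) = ∫ { m(z; π̂ₙ(ω,·), μ̂ₙ(ω,·,·)) } dP_Z(z) − E[μ₀(L,1) − μ₀(L,0)], where m = m₁ − m₀ and P_Z is the law of Z = (L,A,Y). If the random nuisance errors satisfy n^{1/4}·‖π̂ₙ(ω,·) − π₀‖_{L²(P_L)} → 0 in probability and n^{1/4}·max_{a∈{0,1}} ‖μ̂ₙ(ω,·,a) − μ₀(·,a)‖_{L²(P_L)} → 0 in probability, then √n·Rₙ → 0 in probability; that is, under o_p(n^{−1/4}) nuisance rates the second-order remainder of the doubly robust estimator is asymptotically negligible at the root-n scale. -/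
/-!
Conditioning on `L` turns each arm of the doubly robust score into an exact product of errors:
if `q` is the fitted and `e` the true probability of the arm `A = a`, the tower property gives
`E[1{A=a} (Y - m(L)) / q(L) + m(L)] - E[μ(L)] = E[(q - e)(L) / q(L) * (m - μ)(L)]`.
Since `q ≥ δ'`, Cauchy–Schwarz bounds `|Rₙ|` by `2/δ' * ‖π̂ₙ - π₀‖ * maxₐ ‖μ̂ₙ(·,a) - μ₀(·,a)‖`,
so `√n |Rₙ|` is at most `2/δ'` times the product of the two `n^{1/4}`-scaled errors, and a
product of two sequences tending to zero in probability tends to zero in probability.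
-/

open MeasureTheory ProbabilityTheory Filter

theorem integral_mul_eq_integral_mul_of_condExp_ae_eq {Ω : Type*} {m mΩ : MeasurableSpace Ω}
    {μ : Measure Ω} [IsFiniteMeasure μ] (hm : m ≤ mΩ) {f g h : Ω → ℝ} {c : ℝ}
    (hf : StronglyMeasurable[m] f) (hfc : ∀ ω, ‖f ω‖ ≤ c) (hg : Integrable g μ)
    (hgh : μ[g | m] =ᵐ[μ] h) :
    ∫ ω, f ω * g ω ∂μ = ∫ ω, f ω * h ω ∂μ := calc
  ∫ ω, f ω * g ω ∂μ = ∫ ω, μ[f * g | m] ω ∂μ := (integral_condExp hm).symm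
  _ = ∫ ω, f ω * h ω ∂μ := integral_congr_ae <|
    (condExp_stronglyMeasurable_mul_of_bound hm hf hg c (ae_of_all _ hfc)).trans
      (hgh.mono fun ω hω => by simp only [Pi.mul_apply, hω])

theorem integral_abs_mul_le_sqrt_mul_sqrt {α : Type*} [MeasurableSpace α] {μ : Measure α}
    {f g : α → ℝ} (hf : MemLp f 2 μ) (hg : MemLp g 2 μ) :
    ∫ x, |f x * g x| ∂μ ≤ √(∫ x, f x ^ 2 ∂μ) * √(∫ x, g x ^ 2 ∂μ) := by
  have hsq : ∀ φ : α → ℝ, (fun x => ‖φ x‖ ^ (2 : ℝ)) = fun x => φ x ^ 2 := fun φ => by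
    ext x; rw [Real.rpow_two, Real.norm_eq_abs, sq_abs]
  have h := integral_mul_norm_le_Lp_mul_Lq (μ := μ) Real.HolderConjugate.two_two
    (by simpa using hf) (by simpa using hg)
  rw [hsq, hsq, ← Real.sqrt_eq_rpow, ← Real.sqrt_eq_rpow] at h
  simpa only [abs_mul, Real.norm_eq_abs] using h

theorem abs_integral_div_mul_le {α : Type*} [MeasurableSpace α] {μ : Measure α}
    {f q g : α → ℝ} {c : ℝ} (hc : 0 < c) (hq : ∀ x, c ≤ q x)
    (hf : MemLp f 2 μ) (hg : MemLp g 2 μ) :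
    |∫ x, f x / q x * g x ∂μ| ≤ c⁻¹ * (√(∫ x, f x ^ 2 ∂μ) * √(∫ x, g x ^ 2 ∂μ)) := by
  have hpt : ∀ x, |f x / q x * g x| ≤ c⁻¹ * |f x * g x| := fun x => by
    rw [div_mul_eq_mul_div, abs_div, abs_of_pos (hc.trans_le (hq x)), div_eq_inv_mul]
    gcongr
    exact hq x
  calc |∫ x, f x / q x * g x ∂μ| ≤ ∫ x, |f x / q x * g x| ∂μ := abs_integral_le_integral_abs
    _ ≤ ∫ x, c⁻¹ * |f x * g x| ∂μ :=
      integral_mono_of_nonneg (ae_of_all _ fun _ => abs_nonneg _)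
        ((hf.integrable_mul hg).abs.const_mul _) (ae_of_all _ hpt)
    _ = c⁻¹ * ∫ x, |f x * g x| ∂μ := integral_const_mul _ _
    _ ≤ _ := by gcongr; exact integral_abs_mul_le_sqrt_mul_sqrt hf hg

theorem TendstoInMeasure.of_abs_le_mul {Ω ι : Type*} [MeasurableSpace Ω] {μ : Measure Ω}
    {l : Filter ι} {F f g : ι → Ω → ℝ} {C : ℝ} (hC : 0 < C)
    (hle : ∀ i ω, |F i ω| ≤ C * (|f i ω| * |g i ω|))
    (hf : TendstoInMeasure μ f l 0) (hg : TendstoInMeasure μ g l 0) :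
    TendstoInMeasure μ F l 0 := by
  simp only [tendstoInMeasure_iff_norm, Pi.zero_apply, sub_zero, Real.norm_eq_abs] at hf hg ⊢
  intro ε hε
  set s := √(ε / C)
  have hs : 0 < s := Real.sqrt_pos.2 (div_pos hε hC)
  have hsub : ∀ i, {ω | ε ≤ |F i ω|} ⊆ {ω | s ≤ |f i ω|} ∪ {ω | s ≤ |g i ω|} :=
    fun i ω hω => by
      simp only [Set.mem_union, Set.mem_ofPred_eq] at hω ⊢
      by_contra! hlt
      have hss : C * (s * s) = ε := by
        rw [Real.mul_self_sqrt (div_pos hε hC).le]; field_simp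
      have : C * (|f i ω| * |g i ω|) < C * (s * s) := mul_lt_mul_of_pos_left
        (mul_lt_mul'' hlt.1 hlt.2 (abs_nonneg _) (abs_nonneg _)) hC
      linarith [hle i ω]
  refine tendsto_of_tendsto_of_tendsto_of_le_of_le tendsto_const_nhds
    (by simpa using (hf s hs).add (hg s hs)) (fun _ => zero_le) fun i => ?_
  exact (measure_mono (hsub i)).trans (measure_union_le _ _)

theorem abs_sqrt_mul_le {x r a b C : ℝ} (hx : 0 ≤ x) (ha : 0 ≤ a) (hb : 0 ≤ b)
    (hr : |r| ≤ C * (a * b)) :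
    |√x * r| ≤ C * (|x ^ (1 / 4 : ℝ) * a| * |x ^ (1 / 4 : ℝ) * b|) := by
  have hsqrt : √x = x ^ (1 / 4 : ℝ) * x ^ (1 / 4 : ℝ) := by
    rw [← Real.rpow_add' hx (by norm_num), Real.sqrt_eq_rpow]; norm_num
  have hx4 : 0 ≤ x ^ (1 / 4 : ℝ) := by positivity
  rw [abs_mul, abs_of_nonneg (Real.sqrt_nonneg _), abs_of_nonneg (mul_nonneg hx4 ha),
    abs_of_nonneg (mul_nonneg hx4 hb)]
  calc √x * |r| ≤ √x * (C * (a * b)) := by gcongr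
    _ = _ := by rw [hsqrt]; ring

section AugmentedIPW

variable {Ω 𝓛 : Type*} [MeasurableSpace Ω] [MeasurableSpace 𝓛] {P : Measure Ω}

theorem condExp_ite_eq_zero_ae_eq [IsFiniteMeasure P] {L : Ω → 𝓛} (hL : Measurable L)
    {A : Ω → ℝ} (hA : Measurable A) (hA01 : ∀ ω, A ω = 0 ∨ A ω = 1) {e : Ω → ℝ}
    (he : P[fun ω => if A ω = 1 then (1 : ℝ) else 0 | MeasurableSpace.comap L inferInstance]
      =ᵐ[P] e) :
    P[fun ω => if A ω = 0 then (1 : ℝ) else 0 | MeasurableSpace.comap L inferInstance]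
      =ᵐ[P] fun ω => 1 - e ω := by
  have hind : (fun ω => if A ω = 0 then (1 : ℝ) else 0)
      = (fun _ => 1) - fun ω => if A ω = 1 then (1 : ℝ) else 0 := by
    ext ω; rcases hA01 ω with h | h <;> simp [h]
  have hint : Integrable (fun ω => if A ω = 1 then (1 : ℝ) else 0) P :=
    .of_bound (Measurable.ite (hA (measurableSet_singleton 1)) measurable_const
      measurable_const).aestronglyMeasurable 1 (ae_of_all _ fun ω => by split_ifs <;> simp)
  rw [hind]
  refine (condExp_sub (integrable_const 1) hint _).trans ?_
  rw [condExp_const hL.comap_le]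
  exact he.mono fun ω hω => by simp only [Pi.sub_apply, hω]

variable {L : Ω → 𝓛} {I Y : Ω → ℝ} {q m e μ : 𝓛 → ℝ} {c : ℝ}

theorem integrable_augmented_ipw (hL : Measurable L) (hI : Measurable I) (hI1 : ∀ ω, |I ω| ≤ 1)
    (hY : Integrable Y P) (hq : Measurable q) (hc : 0 < c) (hqc : ∀ l, c ≤ q l)
    (hmL : Integrable (fun ω => m (L ω)) P) :
    Integrable (fun ω => I ω * (Y ω - m (L ω)) / q (L ω) + m (L ω)) P := by
  have hbound : ∀ ω, ‖I ω / q (L ω)‖ ≤ c⁻¹ := fun ω => by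
    rw [Real.norm_eq_abs, abs_div, abs_of_pos (hc.trans_le (hqc _)), div_eq_mul_inv]
    calc |I ω| * (q (L ω))⁻¹ ≤ 1 * c⁻¹ :=
          mul_le_mul (hI1 ω) (inv_anti₀ hc (hqc _)) (inv_pos.2 (hc.trans_le (hqc _))).le zero_le_one
      _ = c⁻¹ := one_mul _
  refine Integrable.add ?_ hmL
  exact ((hY.sub hmL).bdd_mul (hI.div (hq.comp hL)).aestronglyMeasurable
    (ae_of_all _ hbound)).congr (ae_of_all _ fun ω => by
      simp only [Pi.sub_apply, Pi.div_apply, Function.comp_apply]; ring)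

theorem condExp_mul_sub_comp_ae_eq [IsFiniteMeasure P] (hI : Measurable I)
    (hI1 : ∀ ω, |I ω| ≤ 1) (hY : Integrable Y P) (hm : Measurable m)
    (hmL : Integrable (fun ω => m (L ω)) P)
    (hIe : P[I | MeasurableSpace.comap L inferInstance] =ᵐ[P] fun ω => e (L ω))
    (hYI : P[fun ω => Y ω * I ω | MeasurableSpace.comap L inferInstance]
      =ᵐ[P] fun ω => μ (L ω) * e (L ω)) :
    P[fun ω => I ω * (Y ω - m (L ω)) | MeasurableSpace.comap L inferInstance]
      =ᵐ[P] fun ω => e (L ω) * (μ (L ω) - m (L ω)) := by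
  have hIbdd : ∀ᵐ ω ∂P, ‖I ω‖ ≤ 1 := ae_of_all _ fun ω => (Real.norm_eq_abs _).trans_le (hI1 ω)
  have hmI : Integrable (m ∘ L * I) P := hmL.mul_bdd hI.aestronglyMeasurable hIbdd
  have hsplit : (fun ω => I ω * (Y ω - m (L ω))) = (fun ω => Y ω * I ω) - m ∘ L * I := by
    ext ω; simp only [Pi.sub_apply, Pi.mul_apply, Function.comp_apply]; ring
  rw [hsplit]
  filter_upwards [condExp_sub (hY.mul_bdd hI.aestronglyMeasurable hIbdd) hmI
      (MeasurableSpace.comap L inferInstance), hYI,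
    condExp_mul_of_stronglyMeasurable_left (hm.comp (comap_measurable L)).stronglyMeasurable hmI
      (.of_bound hI.aestronglyMeasurable 1 hIbdd), hIe] with ω h₁ h₂ h₃ h₄
  rw [h₁, Pi.sub_apply, h₂, h₃, Pi.mul_apply, h₄, Function.comp_apply]
  ring

theorem integral_augmented_ipw_sub [IsFiniteMeasure P] (hL : Measurable L) (hI : Measurable I)
    (hI1 : ∀ ω, |I ω| ≤ 1) (hY : Integrable Y P) (hq : Measurable q) (hc : 0 < c)
    (hqc : ∀ l, c ≤ q l) (hm : Measurable m) (hmL : Integrable (fun ω => m (L ω)) P)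
    (hμL : Integrable (fun ω => μ (L ω)) P)
    (hIe : P[I | MeasurableSpace.comap L inferInstance] =ᵐ[P] fun ω => e (L ω))
    (hYI : P[fun ω => Y ω * I ω | MeasurableSpace.comap L inferInstance]
      =ᵐ[P] fun ω => μ (L ω) * e (L ω)) :
    ∫ ω, (I ω * (Y ω - m (L ω)) / q (L ω) + m (L ω)) ∂P - ∫ ω, μ (L ω) ∂P
      = ∫ ω, (q (L ω) - e (L ω)) / q (L ω) * (m (L ω) - μ (L ω)) ∂P := by
  have hqpos : ∀ l, 0 < q l := fun l => hc.trans_le (hqc l)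
  have hw : ∀ ω, ‖(q (L ω))⁻¹‖ ≤ c⁻¹ := fun ω => by
    rw [norm_inv, Real.norm_of_nonneg (hqpos _).le]; exact inv_anti₀ hc (hqc _)
  have hIbdd : ∀ᵐ ω ∂P, ‖I ω‖ ≤ 1 := ae_of_all _ fun ω => (Real.norm_eq_abs _).trans_le (hI1 ω)
  have hcond := condExp_mul_sub_comp_ae_eq hI hI1 hY hm hmL hIe hYI
  have hIY : Integrable (fun ω => I ω * (Y ω - m (L ω))) P :=
    (hY.sub hmL).bdd_mul hI.aestronglyMeasurable hIbdd
  have hwm : StronglyMeasurable[MeasurableSpace.comap L inferInstance] fun ω => (q (L ω))⁻¹ :=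
    (hq.comp (comap_measurable L)).inv.stronglyMeasurable
  have hwMeas : AEStronglyMeasurable (fun ω => (q (L ω))⁻¹) P :=
    (hq.comp hL).inv.aestronglyMeasurable
  have hpulled : Integrable (fun ω => (q (L ω))⁻¹ * (e (L ω) * (μ (L ω) - m (L ω)))) P :=
    ((integrable_condExp (m := MeasurableSpace.comap L inferInstance)
      (f := fun ω => I ω * (Y ω - m (L ω)))).bdd_mul hwMeas (ae_of_all _ hw)).congr
        (hcond.mono fun ω hω => by dsimp only; rw [hω])
  calc ∫ ω, (I ω * (Y ω - m (L ω)) / q (L ω) + m (L ω)) ∂P - ∫ ω, μ (L ω) ∂P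
      = ∫ ω, (q (L ω))⁻¹ * (I ω * (Y ω - m (L ω))) ∂P + ∫ ω, m (L ω) ∂P - ∫ ω, μ (L ω) ∂P := by
        rw [← integral_add ((hIY.bdd_mul hwMeas (ae_of_all _ hw))) hmL]
        simp only [div_eq_inv_mul]
    _ = ∫ ω, (q (L ω))⁻¹ * (e (L ω) * (μ (L ω) - m (L ω))) ∂P + ∫ ω, m (L ω) ∂P
          - ∫ ω, μ (L ω) ∂P := by
        rw [integral_mul_eq_integral_mul_of_condExp_ae_eq hL.comap_le hwm hw hIY hcond]
    _ = ∫ ω, ((q (L ω))⁻¹ * (e (L ω) * (μ (L ω) - m (L ω))) + m (L ω) - μ (L ω)) ∂P := by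
        rw [integral_sub (by exact hpulled.add hmL) hμL, integral_add hpulled hmL]
    _ = _ := integral_congr_ae <| ae_of_all _ fun ω => by
        field_simp [(hqpos (L ω)).ne']
        ring

theorem abs_integral_augmented_ipw_sub_le [IsFiniteMeasure P] (hL : Measurable L)
    (hI : Measurable I) (hI1 : ∀ ω, |I ω| ≤ 1) (hY : Integrable Y P) (hq : Measurable q)
    (hc : 0 < c) (hqc : ∀ l, c ≤ q l) (hm : Measurable m) (hm2 : MemLp m 2 (P.map L))
    (hμ2 : MemLp μ 2 (P.map L)) (hqe : MemLp (fun l => q l - e l) 2 (P.map L))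
    (hIe : P[I | MeasurableSpace.comap L inferInstance] =ᵐ[P] fun ω => e (L ω))
    (hYI : P[fun ω => Y ω * I ω | MeasurableSpace.comap L inferInstance]
      =ᵐ[P] fun ω => μ (L ω) * e (L ω)) :
    |∫ ω, (I ω * (Y ω - m (L ω)) / q (L ω) + m (L ω)) ∂P - ∫ ω, μ (L ω) ∂P|
      ≤ c⁻¹ * (√(∫ l, (q l - e l) ^ 2 ∂P.map L) * √(∫ l, (m l - μ l) ^ 2 ∂P.map L)) := by
  have hmμ := hm2.sub hμ2
  rw [integral_augmented_ipw_sub hL hI hI1 hY hq hc hqc hm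
      ((hm2.integrable one_le_two).comp_measurable hL)
      ((hμ2.integrable one_le_two).comp_measurable hL) hIe hYI,
    ← integral_map hL.aemeasurable (f := fun l => (q l - e l) / q l * (m l - μ l))
      ((hqe.1.div₀ hq.aestronglyMeasurable).mul hmμ.1)]
  exact abs_integral_div_mul_le hc hqc hqe hmμ

/-- The paper's `m(z; π, μ) = m₁ - m₀` at `z = (l, a, y)`, with `p = π` and `mₐ = μ(·, a)`. -/
noncomputable def doublyRobustScore (p m₁ m₀ : 𝓛 → ℝ) (z : 𝓛 × ℝ × ℝ) : ℝ :=
  ((if z.2.1 = 1 then 1 else 0) * (z.2.2 - m₁ z.1) / p z.1 + m₁ z.1)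
    - ((if z.2.1 = 0 then 1 else 0) * (z.2.2 - m₀ z.1) / (1 - p z.1) + m₀ z.1)

theorem measurable_doublyRobustScore {p m₁ m₀ : 𝓛 → ℝ} (hp : Measurable p)
    (hm₁ : Measurable m₁) (hm₀ : Measurable m₀) :
    Measurable (doublyRobustScore p m₁ m₀) := by
  have hind : ∀ a : ℝ, Measurable fun z : 𝓛 × ℝ × ℝ => if z.2.1 = a then (1 : ℝ) else 0 :=
    fun a => Measurable.ite (measurable_snd.fst (measurableSet_singleton a)) measurable_const
      measurable_const
  unfold doublyRobustScore
  fun_prop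

theorem abs_integral_doublyRobustScore_sub_le [IsFiniteMeasure P] {A : Ω → ℝ}
    {π₀ p μ₁ μ₀ m₁ m₀ : 𝓛 → ℝ} {δ' : ℝ} (hL : Measurable L) (hA : Measurable A) (hY : Measurable Y)
    (hYint : Integrable Y P) (hπ₀ : Measurable π₀) (hπ₀01 : ∀ l, 0 ≤ π₀ l ∧ π₀ l ≤ 1)
    (hps₁ : P[fun ω => if A ω = 1 then (1 : ℝ) else 0 | MeasurableSpace.comap L inferInstance]
      =ᵐ[P] fun ω => π₀ (L ω))
    (hps₀ : P[fun ω => if A ω = 0 then (1 : ℝ) else 0 | MeasurableSpace.comap L inferInstance]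
      =ᵐ[P] fun ω => 1 - π₀ (L ω))
    (hμ₁ : MemLp μ₁ 2 (P.map L)) (hμ₀ : MemLp μ₀ 2 (P.map L))
    (hreg₁ : P[fun ω => Y ω * (if A ω = 1 then (1 : ℝ) else 0) |
      MeasurableSpace.comap L inferInstance] =ᵐ[P] fun ω => μ₁ (L ω) * π₀ (L ω))
    (hreg₀ : P[fun ω => Y ω * (if A ω = 0 then (1 : ℝ) else 0) |
      MeasurableSpace.comap L inferInstance] =ᵐ[P] fun ω => μ₀ (L ω) * (1 - π₀ (L ω)))
    (hδ' : 0 < δ') (hp : Measurable p) (hpδ' : ∀ l, δ' ≤ p l ∧ p l ≤ 1 - δ')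
    (hm₁meas : Measurable m₁) (hm₀meas : Measurable m₀)
    (hm₁ : MemLp m₁ 2 (P.map L)) (hm₀ : MemLp m₀ 2 (P.map L)) :
    |∫ z, doublyRobustScore p m₁ m₀ z ∂P.map (fun ω => (L ω, A ω, Y ω))
        - ∫ ω, (μ₁ (L ω) - μ₀ (L ω)) ∂P|
      ≤ 2 * δ'⁻¹ * (√(∫ l, (p l - π₀ l) ^ 2 ∂P.map L)
        * max (√(∫ l, (m₁ l - μ₁ l) ^ 2 ∂P.map L)) (√(∫ l, (m₀ l - μ₀ l) ^ 2 ∂P.map L))) := by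
  have hind : ∀ a : ℝ, Measurable fun ω => if A ω = a then (1 : ℝ) else 0 :=
    fun a => Measurable.ite (hA (measurableSet_singleton a)) measurable_const measurable_const
  have hind_abs : ∀ a : ℝ, ∀ ω, |if A ω = a then (1 : ℝ) else 0| ≤ 1 :=
    fun a ω => by split_ifs <;> simp
  have hcomp : ∀ f : 𝓛 → ℝ, MemLp f 2 (P.map L) → Integrable (fun ω => f (L ω)) P :=
    fun f hf => (hf.integrable one_le_two).comp_measurable hL
  have hq₀ : ∀ l, δ' ≤ 1 - p l := fun l => by linarith [hpδ' l]
  have herr : ∀ l, |p l - π₀ l| ≤ 1 := fun l => abs_le.2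
    ⟨by linarith [hpδ' l, hπ₀01 l], by linarith [hpδ' l, hπ₀01 l]⟩
  have hπerr₁ : MemLp (fun l => p l - π₀ l) 2 (P.map L) :=
    .of_bound (hp.sub hπ₀).aestronglyMeasurable 1 (ae_of_all _ herr)
  have hπerr₀ : MemLp (fun l => (1 - p l) - (1 - π₀ l)) 2 (P.map L) :=
    .of_bound (by fun_prop) 1 (ae_of_all _ fun l => by
      rw [Real.norm_eq_abs, ← abs_neg]; convert herr l using 2; ring)
  have harm₁ := abs_integral_augmented_ipw_sub_le hL (hind 1) (hind_abs 1) hYint hp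
    hδ' (fun l => (hpδ' l).1) hm₁meas hm₁ hμ₁ hπerr₁ hps₁ hreg₁
  have harm₀ := abs_integral_augmented_ipw_sub_le (q := fun l => 1 - p l) hL (hind 0)
    (hind_abs 0) hYint (measurable_const.sub hp) hδ' hq₀ hm₀meas hm₀ hμ₀ hπerr₀ hps₀ hreg₀
  rw [show ∫ l, ((1 - p l) - (1 - π₀ l)) ^ 2 ∂P.map L = ∫ l, (p l - π₀ l) ^ 2 ∂P.map L from
    integral_congr_ae (ae_of_all _ fun l => by ring)] at harm₀
  have hsplit : ∫ ω, doublyRobustScore p m₁ m₀ (L ω, A ω, Y ω) ∂P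
      = ∫ ω, ((if A ω = 1 then 1 else 0) * (Y ω - m₁ (L ω)) / p (L ω) + m₁ (L ω)) ∂P
        - ∫ ω, ((if A ω = 0 then 1 else 0) * (Y ω - m₀ (L ω)) / (1 - p (L ω)) + m₀ (L ω)) ∂P :=
    integral_sub
      (integrable_augmented_ipw hL (hind 1) (hind_abs 1) hYint hp hδ' (fun l => (hpδ' l).1)
        (hcomp _ hm₁))
      (integrable_augmented_ipw (q := fun l => 1 - p l) hL (hind 0) (hind_abs 0) hYint
        (measurable_const.sub hp) hδ' hq₀ (hcomp _ hm₀))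
  rw [integral_map (hL.prodMk (hA.prodMk hY)).aemeasurable
      (measurable_doublyRobustScore hp hm₁meas hm₀meas).aestronglyMeasurable, hsplit,
    integral_sub (hcomp _ hμ₁) (hcomp _ hμ₀)]
  set S := √(∫ l, (p l - π₀ l) ^ 2 ∂P.map L)
  set a₁ := ∫ ω, ((if A ω = 1 then 1 else 0) * (Y ω - m₁ (L ω)) / p (L ω) + m₁ (L ω)) ∂P
  set a₀ := ∫ ω, ((if A ω = 0 then 1 else 0) * (Y ω - m₀ (L ω)) / (1 - p (L ω)) + m₀ (L ω)) ∂P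
  calc |a₁ - a₀ - (∫ ω, μ₁ (L ω) ∂P - ∫ ω, μ₀ (L ω) ∂P)|
        = |(a₁ - ∫ ω, μ₁ (L ω) ∂P) - (a₀ - ∫ ω, μ₀ (L ω) ∂P)| := by ring_nf
    _ ≤ δ'⁻¹ * (S * √(∫ l, (m₁ l - μ₁ l) ^ 2 ∂P.map L))
        + δ'⁻¹ * (S * √(∫ l, (m₀ l - μ₀ l) ^ 2 ∂P.map L)) :=
        (abs_sub _ _).trans (add_le_add harm₁ harm₀)
    _ ≤ _ := by
      rw [two_mul, add_mul]
      gcongr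
      exacts [le_max_left _ _, le_max_right _ _]

end AugmentedIPW

theorem doubly_robust_remainder_negligible_general
    {Ω 𝓛 : Type*} [MeasurableSpace Ω] [MeasurableSpace 𝓛]
    (P : Measure Ω) [IsProbabilityMeasure P]
    (L : Ω → 𝓛) (A Y : Ω → ℝ)
    (hL : Measurable L) (hA : Measurable A) (hY : Measurable Y)
    (hA01 : ∀ ω, A ω = 0 ∨ A ω = 1)
    (hYint : Integrable Y P)
    -- π₀(L) is a version of P(A = 1 ∣ σ(L))
    (π₀ : 𝓛 → ℝ) (hπ₀ : Measurable π₀) (hπ₀01 : ∀ l, 0 ≤ π₀ l ∧ π₀ l ≤ 1)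
    (hps : P[(fun ω => if A ω = 1 then (1 : ℝ) else 0) |
        MeasurableSpace.comap L inferInstance] =ᵐ[P] fun ω => π₀ (L ω))
    -- outcome regression: E[Y·1{A=a} ∣ σ(L)] = μ₀(L,a)·π₀ₐ(L) a.s. for a = 0, 1
    (μ₀ : 𝓛 → ℝ → ℝ)
    (hreg : ∀ a ∈ ({0, 1} : Set ℝ),
      P[(fun ω => Y ω * (if A ω = a then (1 : ℝ) else 0)) |
          MeasurableSpace.comap L inferInstance]
        =ᵐ[P] fun ω => μ₀ (L ω) a * (a * π₀ (L ω) + (1 - a) * (1 - π₀ (L ω))))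
    (hμ₀L2 : ∀ a ∈ ({0, 1} : Set ℝ), MemLp (fun l => μ₀ l a) 2 (Measure.map L P))
    -- estimated nuisance functions: jointly measurable, π̂ₙ ∈ [δ', 1−δ'],
    -- μ̂ₙ(ω,·,a) square-integrable in L for each ω
    (δ' : ℝ) (hδ' : 0 < δ')
    (πhat : ℕ → Ω → 𝓛 → ℝ)
    (hπhatmeas : ∀ n, Measurable fun p : Ω × 𝓛 => πhat n p.1 p.2)
    (hπhatbdd : ∀ n ω l, δ' ≤ πhat n ω l ∧ πhat n ω l ≤ 1 - δ')
    (μhat : ℕ → Ω → 𝓛 → ℝ → ℝ)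
    (hμhatmeas : ∀ n, ∀ a ∈ ({0, 1} : Set ℝ),
      Measurable fun p : Ω × 𝓛 => μhat n p.1 p.2 a)
    (hμhatL2 : ∀ n ω, ∀ a ∈ ({0, 1} : Set ℝ),
      MemLp (fun l => μhat n ω l a) 2 (Measure.map L P))
    -- the random second-order remainder Rₙ
    (R : ℕ → Ω → ℝ)
    (hR : ∀ n ω, R n ω =
      (∫ z : 𝓛 × ℝ × ℝ,
          (((if z.2.1 = 1 then (1 : ℝ) else 0) * (z.2.2 - μhat n ω z.1 1)
              / (πhat n ω z.1) + μhat n ω z.1 1)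
            - ((if z.2.1 = 0 then (1 : ℝ) else 0) * (z.2.2 - μhat n ω z.1 0)
              / (1 - πhat n ω z.1) + μhat n ω z.1 0))
          ∂(Measure.map (fun ω' => (L ω', A ω', Y ω')) P))
        - ∫ ω', (μ₀ (L ω') 1 - μ₀ (L ω') 0) ∂P)
    -- nuisance rate conditions: o_p(n^{-1/4}) errors in L²(P_L)
    (hπrate : TendstoInMeasure P
      (fun (n : ℕ) (ω : Ω) => (n : ℝ) ^ ((1 : ℝ) / 4)
        * Real.sqrt (∫ l, (πhat n ω l - π₀ l) ^ 2 ∂(Measure.map L P)))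
      atTop (fun _ => (0 : ℝ)))
    (hμrate : TendstoInMeasure P
      (fun (n : ℕ) (ω : Ω) => (n : ℝ) ^ ((1 : ℝ) / 4)
        * max (Real.sqrt (∫ l, (μhat n ω l 1 - μ₀ l 1) ^ 2 ∂(Measure.map L P)))
              (Real.sqrt (∫ l, (μhat n ω l 0 - μ₀ l 0) ^ 2 ∂(Measure.map L P))))
      atTop (fun _ => (0 : ℝ))) :
    TendstoInMeasure P (fun (n : ℕ) (ω : Ω) => Real.sqrt n * R n ω)
      atTop (fun _ => (0 : ℝ)) := by
  have h₁ : (1 : ℝ) ∈ ({0, 1} : Set ℝ) := by simp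
  have h₀ : (0 : ℝ) ∈ ({0, 1} : Set ℝ) := by simp
  have hreg₁ : P[fun ω => Y ω * (if A ω = 1 then (1 : ℝ) else 0) |
      MeasurableSpace.comap L inferInstance] =ᵐ[P] fun ω => μ₀ (L ω) 1 * π₀ (L ω) :=
    (hreg 1 h₁).trans (.of_eq (by ext; ring))
  have hreg₀ : P[fun ω => Y ω * (if A ω = 0 then (1 : ℝ) else 0) |
      MeasurableSpace.comap L inferInstance] =ᵐ[P] fun ω => μ₀ (L ω) 0 * (1 - π₀ (L ω)) :=
    (hreg 0 h₀).trans (.of_eq (by ext; ring))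
  refine TendstoInMeasure.of_abs_le_mul (C := 2 * δ'⁻¹) (by positivity)
    (fun n ω => abs_sqrt_mul_le n.cast_nonneg (by positivity) (by positivity) ?_) hπrate hμrate
  have h := abs_integral_doublyRobustScore_sub_le (μ₁ := (μ₀ · 1)) (μ₀ := (μ₀ · 0))
    hL hA hY hYint hπ₀ hπ₀01 hps (condExp_ite_eq_zero_ae_eq hL hA hA01 hps)
    (hμ₀L2 1 h₁) (hμ₀L2 0 h₀) hreg₁ hreg₀ hδ' ((hπhatmeas n).comp measurable_prodMk_left)
    (hπhatbdd n ω) ((hμhatmeas n 1 h₁).comp measurable_prodMk_left)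
    ((hμhatmeas n 0 h₀).comp measurable_prodMk_left) (hμhatL2 n ω 1 h₁) (hμhatL2 n ω 0 h₀)
  unfold doublyRobustScore at h
  rwa [hR n ω]

/-- Under `o_p(n^{−1/4})` nuisance rates, the second-order remainder of the
doubly robust estimator is asymptotically negligible at the root-n scale: with
`Rₙ(ω) = ∫ m(z; π̂ₙ(ω,·), μ̂ₙ(ω,·,·)) dP_Z(z) − E[μ₀(L,1) − μ₀(L,0)]`, `m = m₁ − m₀`, if
`n^{1/4}·‖π̂ₙ − π₀‖_{L²(P_L)} → 0` and `n^{1/4}·maxₐ‖μ̂ₙ(·,a) − μ₀(·,a)‖_{L²(P_L)} → 0` in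
probability, then `√n·Rₙ → 0` in probability. -/
theorem doubly_robust_remainder_negligible
    {Ω 𝓛 : Type*} [MeasurableSpace Ω] [MeasurableSpace 𝓛]
    (P : Measure Ω) [IsProbabilityMeasure P]
    (L : Ω → 𝓛) (A Y : Ω → ℝ)
    (hL : Measurable L) (hA : Measurable A) (hY : Measurable Y)
    (hA01 : ∀ ω, A ω = 0 ∨ A ω = 1)
    (hYint : Integrable Y P)
    -- π₀(L) is a version of P(A = 1 ∣ σ(L))
    (π₀ : 𝓛 → ℝ) (hπ₀ : Measurable π₀) (hπ₀01 : ∀ l, 0 ≤ π₀ l ∧ π₀ l ≤ 1)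
    (hps : P[(fun ω => if A ω = 1 then (1 : ℝ) else 0) |
        MeasurableSpace.comap L inferInstance] =ᵐ[P] fun ω => π₀ (L ω))
    -- positivity: δ ≤ π₀(L) ≤ 1 − δ a.s. for some δ > 0
    (δ : ℝ) (hδ : 0 < δ) (hpos : ∀ᵐ ω ∂P, δ ≤ π₀ (L ω) ∧ π₀ (L ω) ≤ 1 - δ)
    -- outcome regression: E[Y·1{A=a} ∣ σ(L)] = μ₀(L,a)·π₀ₐ(L) a.s. for a = 0, 1
    (μ₀ : 𝓛 → ℝ → ℝ) (hμ₀ : Measurable fun p : 𝓛 × ℝ => μ₀ p.1 p.2)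
    (hreg : ∀ a ∈ ({0, 1} : Set ℝ),
      P[(fun ω => Y ω * (if A ω = a then (1 : ℝ) else 0)) |
          MeasurableSpace.comap L inferInstance]
        =ᵐ[P] fun ω => μ₀ (L ω) a * (a * π₀ (L ω) + (1 - a) * (1 - π₀ (L ω))))
    (hμ₀L2 : ∀ a ∈ ({0, 1} : Set ℝ), MemLp (fun l => μ₀ l a) 2 (Measure.map L P))
    -- estimated nuisance functions: jointly measurable, π̂ₙ ∈ [δ', 1−δ'],
    -- μ̂ₙ(ω,·,a) square-integrable in L for each ω
    (δ' : ℝ) (hδ' : 0 < δ')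
    (πhat : ℕ → Ω → 𝓛 → ℝ)
    (hπhatmeas : ∀ n, Measurable fun p : Ω × 𝓛 => πhat n p.1 p.2)
    (hπhatbdd : ∀ n ω l, δ' ≤ πhat n ω l ∧ πhat n ω l ≤ 1 - δ')
    (μhat : ℕ → Ω → 𝓛 → ℝ → ℝ)
    (hμhatmeas : ∀ n, ∀ a ∈ ({0, 1} : Set ℝ),
      Measurable fun p : Ω × 𝓛 => μhat n p.1 p.2 a)
    (hμhatL2 : ∀ n ω, ∀ a ∈ ({0, 1} : Set ℝ),
      MemLp (fun l => μhat n ω l a) 2 (Measure.map L P))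
    -- the random second-order remainder Rₙ
    (R : ℕ → Ω → ℝ)
    (hR : ∀ n ω, R n ω =
      (∫ z : 𝓛 × ℝ × ℝ,
          (((if z.2.1 = 1 then (1 : ℝ) else 0) * (z.2.2 - μhat n ω z.1 1)
              / (πhat n ω z.1) + μhat n ω z.1 1)
            - ((if z.2.1 = 0 then (1 : ℝ) else 0) * (z.2.2 - μhat n ω z.1 0)
              / (1 - πhat n ω z.1) + μhat n ω z.1 0))
          ∂(Measure.map (fun ω' => (L ω', A ω', Y ω')) P))
        - ∫ ω', (μ₀ (L ω') 1 - μ₀ (L ω') 0) ∂P)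
    -- nuisance rate conditions: o_p(n^{-1/4}) errors in L²(P_L)
    (hπrate : TendstoInMeasure P
      (fun (n : ℕ) (ω : Ω) => (n : ℝ) ^ ((1 : ℝ) / 4)
        * Real.sqrt (∫ l, (πhat n ω l - π₀ l) ^ 2 ∂(Measure.map L P)))
      atTop (fun _ => (0 : ℝ)))
    (hμrate : TendstoInMeasure P
      (fun (n : ℕ) (ω : Ω) => (n : ℝ) ^ ((1 : ℝ) / 4)
        * max (Real.sqrt (∫ l, (μhat n ω l 1 - μ₀ l 1) ^ 2 ∂(Measure.map L P)))
              (Real.sqrt (∫ l, (μhat n ω l 0 - μ₀ l 0) ^ 2 ∂(Measure.map L P))))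
      atTop (fun _ => (0 : ℝ))) :
    TendstoInMeasure P (fun (n : ℕ) (ω : Ω) => Real.sqrt n * R n ω)
      atTop (fun _ => (0 : ℝ)) :=
  doubly_robust_remainder_negligible_general P L A Y hL hA hY hA01 hYint π₀ hπ₀ hπ₀01 hps μ₀ hreg
    hμ₀L2 δ' hδ' πhat hπhatmeas hπhatbdd μhat hμhatmeas hμhatL2 R hR hπrate hμrate
end
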